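/- arXiv:1806.03804 — 2 statements merged into one kernel-verified Lean document; each statement's English description precedes it below -/
import Mathlib

section
/- Let (Ω, 𝓕, ℙ) be a probability space with a filtration (𝓕_n)_{n≥0}, and let (a_n)_{n≥1} and (b_n)_{n≥1} be two martingale difference sequences with respect to the same filtration (each a_n, b_n is 𝓕_n-measurable with E[a_n | 𝓕_{n−1}] = E[b_n | 𝓕_{n−1}] = 0 a.s.), both uniformly bounded: |a_n| ≤ K and |b_n| ≤ K almost surely. Then for every m ∈ ℕ there exists a constant C = C(m) > 0, independent of N, K and of the sequences, such that E[ (∑_{1 ≤ j₁ < j₂ ≤ N} a_{j₁} b_{j₂})^{2m} ] ≤ C · K^{4m} · N^{2m} for all N ∈ ℕ. -/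
open MeasureTheory Filter

namespace MdsAreaAux

variable {Ω : Type} {mΩ : MeasurableSpace Ω} {ℙ : Measure Ω} [IsProbabilityMeasure ℙ]

lemma integrable_of_bdd {f : Ω → ℝ} {C : ℝ} (hf : AEStronglyMeasurable f ℙ)
    (h : ∀ᵐ ω ∂ℙ, |f ω| ≤ C) : Integrable f ℙ :=
  (integrable_const C).mono' hf (h.mono fun ω hω => by rwa [Real.norm_eq_abs])

lemma integral_mul_condexp_zero {m : MeasurableSpace Ω} (hm : m ≤ mΩ) {g f : Ω → ℝ} {C D : ℝ}
    (hg : StronglyMeasurable[m] g) (hgb : ∀ᵐ ω ∂ℙ, |g ω| ≤ C)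
    (hf : AEStronglyMeasurable[mΩ] f ℙ) (hfb : ∀ᵐ ω ∂ℙ, |f ω| ≤ D)
    (h0 : ℙ[f|m] =ᵐ[ℙ] 0) : ∫ ω, g ω * f ω ∂ℙ = 0 := by
  have hfi : Integrable f ℙ := integrable_of_bdd hf hfb
  have hgae : AEStronglyMeasurable[mΩ] g ℙ := (hg.mono hm).aestronglyMeasurable
  have hgf : Integrable (g * f) ℙ := by
    refine integrable_of_bdd (C := C * D) (hgae.mul hf) ?_
    filter_upwards [hgb, hfb] with ω h1 h2
    calc |(g * f) ω| = |g ω| * |f ω| := by simp [abs_mul]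
      _ ≤ C * D := mul_le_mul h1 h2 (abs_nonneg _) ((abs_nonneg _).trans h1)
  have hpull : ℙ[g * f|m] =ᵐ[ℙ] g * ℙ[f|m] := condExp_mul_of_stronglyMeasurable_left hg hgf hfi
  have h2 : g * ℙ[f|m] =ᵐ[ℙ] (fun _ => (0:ℝ)) := by
    filter_upwards [h0] with ω hω
    simp only [Pi.mul_apply, hω, Pi.zero_apply, mul_zero]
  calc ∫ ω, g ω * f ω ∂ℙ = ∫ ω, (g * f) ω ∂ℙ := rfl
    _ = ∫ ω, (ℙ[g * f|m]) ω ∂ℙ := (integral_condExp hm).symm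
    _ = ∫ _ω, (0:ℝ) ∂ℙ := integral_congr_ae (hpull.trans h2)
    _ = 0 := integral_zero _ _

lemma pow_split (y v : ℝ) (hy : 0 ≤ y) (hv : 0 ≤ v) (p : ℕ) (hp : 1 ≤ p) :
    y ^ p + v * (y+v) ^ (p-1) ≤ (y+v) ^ p := by
  have h := geom_sum₂_mul (y+v) y p
  have hterm : (y+v) ^ (p-1) ≤ ∑ i ∈ Finset.range p, (y+v) ^ i * y ^ (p-1-i) := by
    have hmem : p - 1 ∈ Finset.range p := by simp; omega
    have h2 := Finset.single_le_sum (f := fun i => (y+v) ^ i * y ^ (p-1-i))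
      (fun i _ => by positivity) hmem
    simpa using h2
  nlinarith [mul_le_mul_of_nonneg_left hterm hv]

lemma holder_bound (S w : Ω → ℝ) (RS Bw : ℝ) (p k : ℕ) (hk2 : 2 ≤ k) (hk : k ≤ 2*p)
    (hS : AEStronglyMeasurable S ℙ) (hSb : ∀ᵐ ω ∂ℙ, |S ω| ≤ RS)
    (hw : AEStronglyMeasurable w ℙ) (hwb : ∀ᵐ ω ∂ℙ, |w ω| ≤ Bw) :
    ∫ ω, |S ω| ^ (2*p - k) * |w ω| ^ k ∂ℙ
      ≤ (∫ ω, S ω ^ (2*p) ∂ℙ) ^ (1 - (k:ℝ)/(2*(p:ℝ)))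
        * (∫ ω, w ω ^ (2*p) ∂ℙ) ^ ((k:ℝ)/(2*(p:ℝ))) := by
  have hp1 : 1 ≤ p := by omega
  have hppos : (0:ℝ) < (p:ℝ) := by exact_mod_cast (by omega : 0 < p)
  have h2p : (0:ℝ) < 2*(p:ℝ) := by linarith
  have heven : Even (2*p) := ⟨p, two_mul p⟩
  rcases hk.eq_or_lt with hkEq | hkLt
  · have hcast : (k:ℝ) = 2*(p:ℝ) := by rw [hkEq]; push_cast; ring
    rw [hcast, div_self (ne_of_gt h2p)]
    rw [show (1:ℝ) - 1 = 0 by norm_num, Real.rpow_zero, Real.rpow_one, one_mul]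
    have hpt : ∀ ω : Ω, |S ω| ^ (2*p - k) * |w ω| ^ k = w ω ^ (2*p) := fun ω => by
      rw [hkEq, Nat.sub_self, pow_zero, one_mul, heven.pow_abs]
    exact le_of_eq (integral_congr_ae (Filter.Eventually.of_forall hpt))
  · set r : ℝ := (2*(p:ℝ))/((2*(p:ℝ)) - k) with hr
    set q : ℝ := (2*(p:ℝ))/(k:ℝ) with hq
    have hkR : (k:ℝ) < 2*(p:ℝ) := by exact_mod_cast hkLt
    have hk0 : (0:ℝ) < (k:ℝ) := by exact_mod_cast (by omega : 0 < k)
    have hdk : (0:ℝ) < 2*(p:ℝ) - k := by linarith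
    have hpq : r.HolderConjugate q := by
      rw [Real.holderConjugate_iff]; constructor
      · rw [hr, one_lt_div hdk]; linarith
      · rw [hr, hq, inv_div, inv_div]; field_simp; ring
    have hfm : AEStronglyMeasurable (fun ω => |S ω| ^ (2*p - k)) ℙ :=
      ((measurable_abs.pow_const _).comp_aemeasurable hS.aemeasurable).aestronglyMeasurable
    have hgm : AEStronglyMeasurable (fun ω => |w ω| ^ k) ℙ :=
      ((measurable_abs.pow_const _).comp_aemeasurable hw.aemeasurable).aestronglyMeasurable
    have hfb : MemLp (fun ω => |S ω| ^ (2*p - k)) (ENNReal.ofReal r) ℙ := by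
      refine (memLp_top_of_bound hfm (|RS| ^ (2*p - k)) ?_).mono_exponent le_top
      filter_upwards [hSb] with ω h
      rw [Real.norm_eq_abs, abs_pow, abs_abs]
      exact pow_le_pow_left₀ (abs_nonneg _) (h.trans (le_abs_self RS)) _
    have hgb2 : MemLp (fun ω => |w ω| ^ k) (ENNReal.ofReal q) ℙ := by
      refine (memLp_top_of_bound hgm (|Bw| ^ k) ?_).mono_exponent le_top
      filter_upwards [hwb] with ω h
      rw [Real.norm_eq_abs, abs_pow, abs_abs]
      exact pow_le_pow_left₀ (abs_nonneg _) (h.trans (le_abs_self Bw)) _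
    have H := integral_mul_le_Lp_mul_Lq_of_nonneg hpq
      (Filter.Eventually.of_forall fun ω => by positivity)
      (Filter.Eventually.of_forall fun ω => by positivity) hfb hgb2
    have hfr : ∀ ω : Ω, (|S ω| ^ (2*p - k) : ℝ) ^ r = S ω ^ (2*p) := fun ω => by
      rw [← Real.rpow_natCast (|S ω|) (2*p - k), ← Real.rpow_mul (abs_nonneg _)]
      have he : ((2*p - k : ℕ):ℝ) * r = ((2*p : ℕ):ℝ) := by
        rw [Nat.cast_sub hk, hr]; push_cast; field_simp
      rw [he, Real.rpow_natCast, heven.pow_abs]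
    have hgr : ∀ ω : Ω, (|w ω| ^ k : ℝ) ^ q = w ω ^ (2*p) := fun ω => by
      rw [← Real.rpow_natCast (|w ω|) k, ← Real.rpow_mul (abs_nonneg _)]
      have he : ((k : ℕ):ℝ) * q = ((2*p : ℕ):ℝ) := by
        rw [hq]; push_cast; field_simp
      rw [he, Real.rpow_natCast, heven.pow_abs]
    have h1r : 1/r = 1 - (k:ℝ)/(2*(p:ℝ)) := by
      rw [hr, one_div, inv_div]; field_simp
    have h1q : 1/q = (k:ℝ)/(2*(p:ℝ)) := by rw [hq, one_div, inv_div]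
    simp only [hfr, hgr, h1r, h1q] at H
    exact H

lemma rpow_bound {p k : ℕ} (hp : 1 ≤ p) (hk2 : 2 ≤ k) (hk : k ≤ 2*p)
    {M F W U' u : ℝ} (hM : 1 ≤ M) (hF : 0 ≤ F) (hW : 0 ≤ W) (hU' : 0 ≤ U') (hu : 0 ≤ u)
    (hFle : F ≤ 4 ^ (p*p) * M * U' ^ p) (hWle : W ≤ M * u ^ p) :
    F ^ (1 - (k:ℝ)/(2*(p:ℝ))) * W ^ ((k:ℝ)/(2*(p:ℝ)))
      ≤ 4 ^ (p*(p-1)) * M * (U'+u) ^ (p-1) * u := by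
  have hppos : (0:ℝ) < (p:ℝ) := by exact_mod_cast (by omega : 0 < p)
  have hM0 : (0:ℝ) < M := by linarith
  set x : ℝ := (k:ℝ)/(2*(p:ℝ)) with hxdef
  have hkR : (k:ℝ) ≤ 2*(p:ℝ) := by exact_mod_cast hk
  have hk2R : (2:ℝ) ≤ (k:ℝ) := by exact_mod_cast hk2
  have hx1 : x ≤ 1 := by rw [hxdef, div_le_one (by linarith)]; linarith
  have hx0 : 0 < x := div_pos (by linarith) (by linarith)
  have he : 0 ≤ 1 - x := by linarith
  have hxp : 1/(p:ℝ) ≤ x := by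
    rw [hxdef, div_le_div_iff₀ hppos (by linarith)]; nlinarith
  have hpx1 : 1 ≤ (p:ℝ) * x := by
    have h1 : (p:ℝ) * (1/(p:ℝ)) = 1 := by field_simp
    nlinarith
  set U : ℝ := U' + u with hUdef
  have hU0 : 0 ≤ U := by rw [hUdef]; linarith
  have hF2 : F ≤ 4 ^ (p*p) * M * U ^ p := by
    refine hFle.trans ?_
    have : U' ^ p ≤ U ^ p := pow_le_pow_left₀ hU' (by rw [hUdef]; linarith) p
    have h4 : (0:ℝ) ≤ 4 ^ (p*p) * M := by positivity
    nlinarith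
  have s1 : F ^ (1-x) ≤ (4 ^ (p*p) * M * U ^ p) ^ (1-x) := Real.rpow_le_rpow hF hF2 he
  have s2 : W ^ x ≤ (M * u ^ p) ^ x := Real.rpow_le_rpow hW hWle hx0.le
  have base1 : (0:ℝ) ≤ 4 ^ (p*p) * M * U ^ p := by positivity
  have prod : F ^ (1-x) * W ^ x ≤ (4 ^ (p*p) * M * U ^ p) ^ (1-x) * (M * u ^ p) ^ x :=
    mul_le_mul s1 s2 (Real.rpow_nonneg hW x) (Real.rpow_nonneg base1 _)
  refine prod.trans ?_
  rw [Real.mul_rpow (by positivity) (by positivity),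
      Real.mul_rpow (by positivity) (by positivity),
      Real.mul_rpow (by positivity) (by positivity)]
  have hA : ((4:ℝ) ^ (p*p)) ^ (1-x) ≤ (4:ℝ) ^ (p*(p-1)) := by
    rw [← Real.rpow_natCast (4:ℝ) (p*p), ← Real.rpow_mul (by norm_num : (0:ℝ) ≤ 4),
        ← Real.rpow_natCast (4:ℝ) (p*(p-1))]
    apply Real.rpow_le_rpow_of_exponent_le (by norm_num)
    have hcast : ((p*(p-1) : ℕ):ℝ) = (p:ℝ)*(p:ℝ) - p := by
      rw [Nat.cast_mul, Nat.cast_sub hp]; push_cast; ring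
    rw [hcast]
    push_cast
    nlinarith [hpx1]
  have hM2 : M ^ (1-x) * M ^ x = M := by
    rw [← Real.rpow_add hM0]; norm_num
  have hUu : (U ^ p) ^ (1-x) * (u ^ p) ^ x ≤ U ^ (p-1) * u := by
    rcases hu.eq_or_lt with hu0 | hupos
    · rw [← hu0, zero_pow (by omega : p ≠ 0), Real.zero_rpow (ne_of_gt hx0),
          mul_zero, mul_zero]
    · have hUpos : 0 < U := by rw [hUdef]; linarith
      rw [← Real.rpow_natCast U p, ← Real.rpow_natCast u p,
          ← Real.rpow_mul hU0, ← Real.rpow_mul hu]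
      have hsplit : u ^ ((p:ℝ) * x) = u * u ^ ((p:ℝ) * x - 1) := by
        have h := Real.rpow_add hupos 1 ((p:ℝ)*x - 1)
        rw [Real.rpow_one] at h
        rw [show (1:ℝ) + ((p:ℝ)*x - 1) = (p:ℝ)*x by ring] at h
        exact h
      rw [hsplit]
      have hmono : u ^ ((p:ℝ)*x - 1) ≤ U ^ ((p:ℝ)*x - 1) :=
        Real.rpow_le_rpow hupos.le (by rw [hUdef]; linarith) (by linarith)
      calc U ^ ((p:ℝ)*(1-x)) * (u * u ^ ((p:ℝ)*x - 1))
          ≤ U ^ ((p:ℝ)*(1-x)) * (u * U ^ ((p:ℝ)*x - 1)) := by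
            have h0 : (0:ℝ) ≤ U ^ ((p:ℝ)*(1-x)) := Real.rpow_nonneg hU0 _
            exact mul_le_mul_of_nonneg_left
              (mul_le_mul_of_nonneg_left hmono hupos.le) h0
        _ = (U ^ ((p:ℝ)*(1-x)) * U ^ ((p:ℝ)*x - 1)) * u := by ring
        _ = U ^ ((p:ℝ) - 1) * u := by
            rw [← Real.rpow_add hUpos]; ring_nf
        _ = U ^ (p-1 : ℕ) * u := by
            rw [← Real.rpow_natCast U (p-1), Nat.cast_sub hp, Nat.cast_one]
  calc ((4:ℝ) ^ (p*p)) ^ (1-x) * M ^ (1-x) * (U ^ p) ^ (1-x) * (M ^ x * (u ^ p) ^ x)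
      = (M ^ (1-x) * M ^ x) * (((4:ℝ) ^ (p*p)) ^ (1-x) * ((U ^ p) ^ (1-x) * (u ^ p) ^ x)) := by
        ring
    _ = M * (((4:ℝ) ^ (p*p)) ^ (1-x) * ((U ^ p) ^ (1-x) * (u ^ p) ^ x)) := by rw [hM2]
    _ ≤ M * ((4:ℝ) ^ (p*(p-1)) * (U ^ (p-1) * u)) := by
        refine mul_le_mul_of_nonneg_left ?_ hM0.le
        exact mul_le_mul hA hUu (by positivity) (by positivity)
    _ = 4 ^ (p*(p-1)) * M * U ^ (p-1) * u := by ring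

lemma step (ℱ : Filtration ℕ mΩ) (p : ℕ) (hp : 1 ≤ p) (N : ℕ)
    (S wn dn : Ω → ℝ) (RS Bn un UN : ℝ) (M : ℝ)
    (hM : 1 ≤ M) (hun : 0 ≤ un) (hUN : 0 ≤ UN) (hBn : 0 ≤ Bn)
    (hmS : Measurable[ℱ N] S) (hbS : ∀ᵐ ω ∂ℙ, |S ω| ≤ RS)
    (hmw : Measurable[ℱ N] wn) (hbw : ∀ᵐ ω ∂ℙ, |wn ω| ≤ Bn)
    (hmd : Measurable[ℱ (N+1)] dn) (hbd : ∀ᵐ ω ∂ℙ, |dn ω| ≤ 1)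
    (hcond : ℙ[dn | ℱ N] =ᵐ[ℙ] 0)
    (hmom : ∫ ω, wn ω ^ (2*p) ∂ℙ ≤ M * un ^ p)
    (hF : ∫ ω, S ω ^ (2*p) ∂ℙ ≤ 4 ^ (p*p) * M * UN ^ p) :
    ∫ ω, (wn ω * dn ω + S ω) ^ (2*p) ∂ℙ ≤ 4 ^ (p*p) * M * (UN + un) ^ p := by
  have heven : Even (2*p) := ⟨p, two_mul p⟩
  have hle : (ℱ N : MeasurableSpace Ω) ≤ mΩ := ℱ.le N
  have hle1 : (ℱ (N+1) : MeasurableSpace Ω) ≤ mΩ := ℱ.le (N+1)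
  have haeS : AEStronglyMeasurable S ℙ := (hmS.mono hle le_rfl).aestronglyMeasurable
  have haew : AEStronglyMeasurable wn ℙ := (hmw.mono hle le_rfl).aestronglyMeasurable
  have haed : AEStronglyMeasurable dn ℙ := (hmd.mono hle1 le_rfl).aestronglyMeasurable
  have haeX : AEStronglyMeasurable (fun ω => wn ω * dn ω) ℙ := haew.mul haed
  have hbX : ∀ᵐ ω ∂ℙ, |wn ω * dn ω| ≤ Bn := by
    filter_upwards [hbw, hbd] with ω h1 h2
    calc |wn ω * dn ω| = |wn ω| * |dn ω| := abs_mul _ _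
      _ ≤ Bn * 1 := mul_le_mul h1 h2 (abs_nonneg _) hBn
      _ = Bn := mul_one _
  have hRS : 0 ≤ RS := by
    have hne : (ae ℙ).NeBot := ae_neBot.2 (IsProbabilityMeasure.ne_zero ℙ)
    obtain ⟨ω, hω⟩ := hbS.exists
    exact (abs_nonneg _).trans hω
  have hintk : ∀ k : ℕ, Integrable
      (fun ω => (wn ω * dn ω) ^ k * S ω ^ (2*p - k) * (((2*p).choose k : ℕ) : ℝ)) ℙ := by
    intro k
    refine integrable_of_bdd (C := Bn ^ k * RS ^ (2*p - k) * (((2*p).choose k : ℕ) : ℝ))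
      ((((haeX.aemeasurable.pow_const k).mul
        (haeS.aemeasurable.pow_const (2*p - k))).mul_const _).aestronglyMeasurable) ?_
    filter_upwards [hbX, hbS] with ω h1 h2
    rw [abs_mul, abs_mul, abs_pow, abs_pow, Nat.abs_cast]
    gcongr <;> first | exact abs_nonneg _ | exact h1 | exact h2
  have hpt : (fun ω => (wn ω * dn ω + S ω) ^ (2*p))
      = fun ω => ∑ k ∈ Finset.range (2*p+1),
          (wn ω * dn ω) ^ k * S ω ^ (2*p - k) * (((2*p).choose k : ℕ) : ℝ) := by
    funext ω; rw [add_pow]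
  have expand : ∫ ω, (wn ω * dn ω + S ω) ^ (2*p) ∂ℙ
      = ∑ k ∈ Finset.range (2*p+1), ∫ ω,
          (wn ω * dn ω) ^ k * S ω ^ (2*p - k) * (((2*p).choose k : ℕ) : ℝ) ∂ℙ := by
    rw [hpt]
    exact integral_finset_sum _ fun k _ => hintk k
  have hT0 : ∫ ω, (wn ω * dn ω) ^ 0 * S ω ^ (2*p - 0) * (((2*p).choose 0 : ℕ) : ℝ) ∂ℙ
      = ∫ ω, S ω ^ (2*p) ∂ℙ := by simp
  have hT1 : ∫ ω, (wn ω * dn ω) ^ 1 * S ω ^ (2*p - 1) * (((2*p).choose 1 : ℕ) : ℝ) ∂ℙ = 0 := by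
    have hrw : ∀ ω : Ω, (wn ω * dn ω) ^ 1 * S ω ^ (2*p - 1) * (((2*p).choose 1 : ℕ) : ℝ)
        = (S ω ^ (2*p - 1) * wn ω * (((2*p).choose 1 : ℕ) : ℝ)) * dn ω := fun ω => by ring
    have hg : StronglyMeasurable[ℱ N]
        (fun ω => S ω ^ (2*p - 1) * wn ω * (((2*p).choose 1 : ℕ) : ℝ)) :=
      (((hmS.pow_const _).mul hmw).mul_const _).stronglyMeasurable
    have hgb : ∀ᵐ ω ∂ℙ, |S ω ^ (2*p - 1) * wn ω * (((2*p).choose 1 : ℕ) : ℝ)|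
        ≤ RS ^ (2*p - 1) * Bn * (((2*p).choose 1 : ℕ) : ℝ) := by
      filter_upwards [hbS, hbw] with ω h1 h2
      rw [abs_mul, abs_mul, abs_pow, Nat.abs_cast]
      gcongr <;> first | exact abs_nonneg _ | exact h1 | exact h2
    calc ∫ ω, (wn ω * dn ω) ^ 1 * S ω ^ (2*p - 1) * (((2*p).choose 1 : ℕ) : ℝ) ∂ℙ
        = ∫ ω, (S ω ^ (2*p - 1) * wn ω * (((2*p).choose 1 : ℕ) : ℝ)) * dn ω ∂ℙ :=
          integral_congr_ae (Filter.Eventually.of_forall hrw)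
      _ = 0 := integral_mul_condexp_zero hle hg hgb haed hbd hcond
  have hTk : ∀ k, 2 ≤ k → k ≤ 2*p →
      ∫ ω, (wn ω * dn ω) ^ k * S ω ^ (2*p - k) * (((2*p).choose k : ℕ) : ℝ) ∂ℙ
        ≤ (((2*p).choose k : ℕ) : ℝ) * (4 ^ (p*(p-1)) * M * (UN + un) ^ (p-1) * un) := by
    intro k hk2 hk
    have hint1 : Integrable (fun ω => (wn ω * dn ω) ^ k * S ω ^ (2*p - k)) ℙ := by
      refine integrable_of_bdd (C := Bn ^ k * RS ^ (2*p - k))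
        (((haeX.aemeasurable.pow_const k).mul
          (haeS.aemeasurable.pow_const (2*p - k))).aestronglyMeasurable) ?_
      filter_upwards [hbX, hbS] with ω h1 h2
      rw [abs_mul, abs_pow, abs_pow]
      gcongr <;> first | exact abs_nonneg _ | exact h1 | exact h2
    have hint2 : Integrable (fun ω => |S ω| ^ (2*p - k) * |wn ω| ^ k) ℙ := by
      refine integrable_of_bdd (C := RS ^ (2*p - k) * Bn ^ k)
        ((((measurable_abs.pow_const _).comp_aemeasurable haeS.aemeasurable).mul
          ((measurable_abs.pow_const _).comp_aemeasurable haew.aemeasurable)).aestronglyMeasurable)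
        ?_
      filter_upwards [hbS, hbw] with ω h1 h2
      rw [abs_mul, abs_pow, abs_pow, abs_abs, abs_abs]
      gcongr <;> first | exact abs_nonneg _ | exact h1 | exact h2
    have hmono : ∫ ω, (wn ω * dn ω) ^ k * S ω ^ (2*p - k) ∂ℙ
        ≤ ∫ ω, |S ω| ^ (2*p - k) * |wn ω| ^ k ∂ℙ := by
      refine integral_mono_ae hint1 hint2 ?_
      filter_upwards [hbd] with ω h2
      have habs : |wn ω| * |dn ω| ≤ |wn ω| * 1 :=
        mul_le_mul_of_nonneg_left h2 (abs_nonneg _)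
      calc (wn ω * dn ω) ^ k * S ω ^ (2*p - k)
          ≤ |(wn ω * dn ω) ^ k * S ω ^ (2*p - k)| := le_abs_self _
        _ = (|wn ω| * |dn ω|) ^ k * |S ω| ^ (2*p - k) := by
            rw [abs_mul, abs_pow, abs_pow, abs_mul]
        _ ≤ (|wn ω| * 1) ^ k * |S ω| ^ (2*p - k) := by
            exact mul_le_mul_of_nonneg_right
              (pow_le_pow_left₀ (by positivity) habs k) (by positivity)
        _ = |S ω| ^ (2*p - k) * |wn ω| ^ k := by rw [mul_one]; ring
    have hhold := holder_bound S wn RS Bn p k hk2 hk haeS hbS haew hbw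
    have hFnn : 0 ≤ ∫ ω, S ω ^ (2*p) ∂ℙ := integral_nonneg fun ω => heven.pow_nonneg _
    have hWnn : 0 ≤ ∫ ω, wn ω ^ (2*p) ∂ℙ := integral_nonneg fun ω => heven.pow_nonneg _
    have hrp := rpow_bound hp hk2 hk hM hFnn hWnn hUN hun hF hmom
    have hchain : ∫ ω, (wn ω * dn ω) ^ k * S ω ^ (2*p - k) ∂ℙ
        ≤ 4 ^ (p*(p-1)) * M * (UN + un) ^ (p-1) * un :=
      hmono.trans (hhold.trans hrp)
    calc ∫ ω, (wn ω * dn ω) ^ k * S ω ^ (2*p - k) * (((2*p).choose k : ℕ) : ℝ) ∂ℙ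
        = (∫ ω, (wn ω * dn ω) ^ k * S ω ^ (2*p - k) ∂ℙ) * (((2*p).choose k : ℕ) : ℝ) :=
          integral_mul_const _ _
      _ ≤ (4 ^ (p*(p-1)) * M * (UN + un) ^ (p-1) * un) * (((2*p).choose k : ℕ) : ℝ) :=
          mul_le_mul_of_nonneg_right hchain (by positivity)
      _ = (((2*p).choose k : ℕ) : ℝ) * (4 ^ (p*(p-1)) * M * (UN + un) ^ (p-1) * un) :=
          mul_comm _ _
  have hMnn : (0:ℝ) ≤ M := by linarith
  have hEnn : 0 ≤ 4 ^ (p*(p-1)) * M * (UN + un) ^ (p-1) * un :=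
    mul_nonneg (mul_nonneg (mul_nonneg (by positivity) hMnn)
      (pow_nonneg (by linarith) _)) hun
  have hchoose : (∑ k ∈ Finset.Ico 2 (2*p+1), (((2*p).choose k : ℕ) : ℝ)) ≤ 4 ^ p := by
    have h1 : ∑ k ∈ Finset.Ico 2 (2*p+1), (2*p).choose k
        ≤ ∑ k ∈ Finset.range (2*p+1), (2*p).choose k := by
      refine Finset.sum_le_sum_of_subset ?_
      rw [Finset.range_eq_Ico]
      exact Finset.Ico_subset_Ico (by omega) le_rfl
    rw [Nat.sum_range_choose] at h1
    calc (∑ k ∈ Finset.Ico 2 (2*p+1), (((2*p).choose k : ℕ) : ℝ))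
        = ((∑ k ∈ Finset.Ico 2 (2*p+1), (2*p).choose k : ℕ) : ℝ) := by rw [Nat.cast_sum]
      _ ≤ ((2 ^ (2*p) : ℕ) : ℝ) := by exact_mod_cast h1
      _ = 4 ^ p := by
          push_cast
          rw [pow_mul]
          norm_num
  have hsumIco : ∑ k ∈ Finset.Ico 2 (2*p+1), (∫ ω,
        (wn ω * dn ω) ^ k * S ω ^ (2*p - k) * (((2*p).choose k : ℕ) : ℝ) ∂ℙ)
      ≤ 4 ^ p * (4 ^ (p*(p-1)) * M * (UN + un) ^ (p-1) * un) := by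
    calc ∑ k ∈ Finset.Ico 2 (2*p+1), (∫ ω,
          (wn ω * dn ω) ^ k * S ω ^ (2*p - k) * (((2*p).choose k : ℕ) : ℝ) ∂ℙ)
        ≤ ∑ k ∈ Finset.Ico 2 (2*p+1),
            (((2*p).choose k : ℕ) : ℝ) * (4 ^ (p*(p-1)) * M * (UN + un) ^ (p-1) * un) := by
          refine Finset.sum_le_sum fun k hk => ?_
          rw [Finset.mem_Ico] at hk
          exact hTk k hk.1 (by omega)
      _ = (∑ k ∈ Finset.Ico 2 (2*p+1), (((2*p).choose k : ℕ) : ℝ))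
            * (4 ^ (p*(p-1)) * M * (UN + un) ^ (p-1) * un) := by rw [Finset.sum_mul]
      _ ≤ 4 ^ p * (4 ^ (p*(p-1)) * M * (UN + un) ^ (p-1) * un) :=
          mul_le_mul_of_nonneg_right hchoose hEnn
  have hfinal : (∫ ω, S ω ^ (2*p) ∂ℙ)
      + 4 ^ p * (4 ^ (p*(p-1)) * M * (UN + un) ^ (p-1) * un)
      ≤ 4 ^ (p*p) * M * (UN + un) ^ p := by
    have hps := pow_split UN un hUN hun p hp
    have hnat : p + p*(p-1) = p*p := by
      cases p with
      | zero => simp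
      | succ q => rw [Nat.succ_sub_one]; ring
    have hpow4 : (4:ℝ) ^ p * 4 ^ (p*(p-1)) = 4 ^ (p*p) := by
      rw [← pow_add, hnat]
    have hrw : (4:ℝ) ^ p * (4 ^ (p*(p-1)) * M * (UN + un) ^ (p-1) * un)
        = 4 ^ (p*p) * M * (un * (UN + un) ^ (p-1)) := by
      rw [← hpow4]; ring
    rw [hrw]
    have hcm : (0:ℝ) ≤ 4 ^ (p*p) * M := by positivity
    nlinarith [mul_le_mul_of_nonneg_left hps hcm]
  calc ∫ ω, (wn ω * dn ω + S ω) ^ (2*p) ∂ℙ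
      = ∑ k ∈ Finset.range (2*p+1), ∫ ω,
          (wn ω * dn ω) ^ k * S ω ^ (2*p - k) * (((2*p).choose k : ℕ) : ℝ) ∂ℙ := expand
    _ = (∫ ω, (wn ω * dn ω) ^ 0 * S ω ^ (2*p - 0) * (((2*p).choose 0 : ℕ) : ℝ) ∂ℙ)
        + ((∫ ω, (wn ω * dn ω) ^ 1 * S ω ^ (2*p - 1) * (((2*p).choose 1 : ℕ) : ℝ) ∂ℙ)
        + ∑ k ∈ Finset.Ico 2 (2*p+1), ∫ ω,
            (wn ω * dn ω) ^ k * S ω ^ (2*p - k) * (((2*p).choose k : ℕ) : ℝ) ∂ℙ) := by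
        rw [Finset.range_eq_Ico,
          Finset.sum_eq_sum_Ico_succ_bot (by omega : (0:ℕ) < 2*p+1),
          Finset.sum_eq_sum_Ico_succ_bot (by omega : (0:ℕ)+1 < 2*p+1)]
    _ = (∫ ω, S ω ^ (2*p) ∂ℙ)
        + (0 + ∑ k ∈ Finset.Ico 2 (2*p+1), ∫ ω,
            (wn ω * dn ω) ^ k * S ω ^ (2*p - k) * (((2*p).choose k : ℕ) : ℝ) ∂ℙ) := by
        rw [hT0, hT1]
    _ ≤ (∫ ω, S ω ^ (2*p) ∂ℙ)
        + (0 + 4 ^ p * (4 ^ (p*(p-1)) * M * (UN + un) ^ (p-1) * un)) := by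
        linarith [hsumIco]
    _ ≤ 4 ^ (p*p) * M * (UN + un) ^ p := by linarith [hfinal]

lemma key (ℱ : Filtration ℕ mΩ) (p : ℕ) (hp : 1 ≤ p)
    (d w : ℕ → Ω → ℝ) (B u : ℕ → ℝ) (M : ℝ) (hM : 1 ≤ M)
    (hu : ∀ n, 0 ≤ u n) (hB : ∀ n, 0 ≤ B n)
    (hd_meas : ∀ n, 1 ≤ n → StronglyMeasurable[ℱ n] (d n))
    (hd_cond : ∀ n, 1 ≤ n → ℙ[d n | ℱ (n - 1)] =ᵐ[ℙ] 0)
    (hd_bdd : ∀ n, 1 ≤ n → ∀ᵐ ω ∂ℙ, |d n ω| ≤ 1)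
    (hw_meas : ∀ n, 1 ≤ n → StronglyMeasurable[ℱ (n - 1)] (w n))
    (hw_bdd : ∀ n, 1 ≤ n → ∀ᵐ ω ∂ℙ, |w n ω| ≤ B n)
    (hw_mom : ∀ n, 1 ≤ n → ∫ ω, (w n ω) ^ (2*p) ∂ℙ ≤ M * u n ^ p) :
    ∀ N, ∫ ω, (∑ n ∈ Finset.Icc 1 N, w n ω * d n ω) ^ (2*p) ∂ℙ
      ≤ 4 ^ (p*p) * M * (∑ n ∈ Finset.Icc 1 N, u n) ^ p := by
  have hSmeas : ∀ N, Measurable[ℱ N] (fun ω => ∑ n ∈ Finset.Icc 1 N, w n ω * d n ω) := by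
    intro N
    refine Finset.measurable_sum _ fun j hj => ?_
    rw [Finset.mem_Icc] at hj
    have h1 : Measurable[ℱ N] (w j) :=
      ((hw_meas j hj.1).measurable).mono (ℱ.mono (by omega : j - 1 ≤ N)) le_rfl
    have h2 : Measurable[ℱ N] (d j) :=
      ((hd_meas j hj.1).measurable).mono (ℱ.mono hj.2) le_rfl
    exact h1.mul h2
  have hSbdd : ∀ N, ∀ᵐ ω ∂ℙ, |∑ n ∈ Finset.Icc 1 N, w n ω * d n ω|
      ≤ ∑ n ∈ Finset.Icc 1 N, B n := by
    intro N
    have h : ∀ᵐ ω ∂ℙ, ∀ j ∈ Finset.Icc 1 N, |w j ω * d j ω| ≤ B j := by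
      rw [Filter.eventually_all_finset]
      intro j hj
      rw [Finset.mem_Icc] at hj
      filter_upwards [hw_bdd j hj.1, hd_bdd j hj.1] with ω h1 h2
      calc |w j ω * d j ω| = |w j ω| * |d j ω| := abs_mul _ _
        _ ≤ B j * 1 := mul_le_mul h1 h2 (abs_nonneg _) (hB j)
        _ = B j := mul_one _
    filter_upwards [h] with ω hω
    calc |∑ n ∈ Finset.Icc 1 N, w n ω * d n ω|
        ≤ ∑ n ∈ Finset.Icc 1 N, |w n ω * d n ω| := Finset.abs_sum_le_sum_abs _ _
      _ ≤ ∑ n ∈ Finset.Icc 1 N, B n := Finset.sum_le_sum hω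
  intro N
  induction N with
  | zero =>
    rw [Finset.Icc_eq_empty (by omega : ¬(1:ℕ) ≤ 0)]
    simp [zero_pow (by omega : 2*p ≠ 0), zero_pow (by omega : p ≠ 0)]
  | succ N ih =>
    have hgoal_eq : ∫ ω, (∑ n ∈ Finset.Icc 1 (N+1), w n ω * d n ω) ^ (2*p) ∂ℙ
        = ∫ ω, (w (N+1) ω * d (N+1) ω + ∑ n ∈ Finset.Icc 1 N, w n ω * d n ω) ^ (2*p) ∂ℙ := by
      refine integral_congr_ae (Filter.Eventually.of_forall fun ω => ?_)
      simp only [Finset.sum_Icc_succ_top (show (1:ℕ) ≤ N+1 by omega)]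
      ring
    rw [hgoal_eq, Finset.sum_Icc_succ_top (by omega : (1:ℕ) ≤ N+1)]
    have hmw : Measurable[ℱ N] (w (N+1)) := (hw_meas (N+1) (by omega)).measurable
    have hmd : Measurable[ℱ (N+1)] (d (N+1)) := (hd_meas (N+1) (by omega)).measurable
    exact step ℱ p hp N (fun ω => ∑ n ∈ Finset.Icc 1 N, w n ω * d n ω)
      (w (N+1)) (d (N+1)) (∑ n ∈ Finset.Icc 1 N, B n) (B (N+1)) (u (N+1))
      (∑ n ∈ Finset.Icc 1 N, u n) M hM (hu _)
      (Finset.sum_nonneg fun j _ => hu j) (hB _)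
      (hSmeas N) (hSbdd N) hmw (hw_bdd (N+1) (by omega)) hmd (hd_bdd (N+1) (by omega))
      (hd_cond (N+1) (by omega)) (hw_mom (N+1) (by omega)) ih

end MdsAreaAux

open MeasureTheory

/-- Moment bound for the discrete stochastic area of two uniformly bounded martingale
difference sequences with respect to the same filtration:
`E[(∑_{1 ≤ j₁ < j₂ ≤ N} a_{j₁} b_{j₂})^(2m)] ≤ C K^(4m) N^(2m)` with `C = C(m)`
independent of `N`, `K` and of the sequences. -/
theorem mds_area_moment_bound (m : ℕ) :
    ∃ C : ℝ, 0 < C ∧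
      ∀ (Ω : Type) (mΩ : MeasurableSpace Ω) (ℙ : Measure Ω), IsProbabilityMeasure ℙ →
        ∀ (ℱ : Filtration ℕ mΩ) (a b : ℕ → Ω → ℝ) (K : ℝ),
        (∀ n, 1 ≤ n → StronglyMeasurable[ℱ n] (a n)) →
        (∀ n, 1 ≤ n → Integrable (a n) ℙ) →
        (∀ n, 1 ≤ n → ℙ[a n | ℱ (n - 1)] =ᵐ[ℙ] 0) →
        (∀ n, 1 ≤ n → ∀ᵐ ω ∂ℙ, |a n ω| ≤ K) →
        (∀ n, 1 ≤ n → StronglyMeasurable[ℱ n] (b n)) →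
        (∀ n, 1 ≤ n → Integrable (b n) ℙ) →
        (∀ n, 1 ≤ n → ℙ[b n | ℱ (n - 1)] =ᵐ[ℙ] 0) →
        (∀ n, 1 ≤ n → ∀ᵐ ω ∂ℙ, |b n ω| ≤ K) →
        ∀ N : ℕ,
          ∫ ω, (∑ j₂ ∈ Finset.Icc 1 N, ∑ j₁ ∈ Finset.Ico 1 j₂, a j₁ ω * b j₂ ω) ^ (2 * m) ∂ℙ
            ≤ C * K ^ (4 * m) * (N : ℝ) ^ (2 * m) := by
  classical
  refine ⟨(4:ℝ) ^ (m*m) * 4 ^ (m*m) + 1, by positivity, ?_⟩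
  intro Ω mΩ ℙ hprob ℱ a b K ha_meas ha_int ha_cond ha_bdd hb_meas hb_int hb_cond hb_bdd N
  haveI := hprob
  rcases Nat.eq_zero_or_pos m with hm0 | hm
  · subst hm0
    simp only [Nat.mul_zero, pow_zero]
    rw [integral_const, smul_eq_mul]
    simp [measure_univ]
  · have hK0 : 0 ≤ K := by
      have hne : (ae ℙ).NeBot := ae_neBot.2 (IsProbabilityMeasure.ne_zero ℙ)
      obtain ⟨ω, hω⟩ := (ha_bdd 1 le_rfl).exists
      exact (abs_nonneg _).trans hω
    rcases hK0.eq_or_lt with hK | hK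
    · -- K = 0
      have hzero : ∀ᵐ ω ∂ℙ,
          (∑ j₂ ∈ Finset.Icc 1 N, ∑ j₁ ∈ Finset.Ico 1 j₂, a j₁ ω * b j₂ ω) = 0 := by
        have ha0 : ∀ᵐ ω ∂ℙ, ∀ j ∈ Finset.Icc 1 N, |a j ω| ≤ K := by
          rw [Filter.eventually_all_finset]
          intro j hj
          exact ha_bdd j (Finset.mem_Icc.1 hj).1
        filter_upwards [ha0] with ω hω
        refine Finset.sum_eq_zero fun j₂ hj₂ => Finset.sum_eq_zero fun j₁ hj₁ => ?_
        have h1 : j₁ ∈ Finset.Icc 1 N := by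
          rw [Finset.mem_Ico] at hj₁; rw [Finset.mem_Icc] at hj₂ ⊢; omega
        have h2 := hω j₁ h1
        rw [← hK] at h2
        rw [abs_nonpos_iff.1 h2, zero_mul]
      have hint0 : ∫ ω,
          (∑ j₂ ∈ Finset.Icc 1 N, ∑ j₁ ∈ Finset.Ico 1 j₂, a j₁ ω * b j₂ ω) ^ (2*m) ∂ℙ = 0 := by
        rw [integral_congr_ae (hzero.mono fun ω h => by
          rw [h, zero_pow (by omega : 2*m ≠ 0)])]
        simp
      rw [hint0, ← hK, zero_pow (by omega : 4*m ≠ 0)]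
      simp
    · -- K > 0
      have hKinv : 0 ≤ K⁻¹ := inv_nonneg.2 hK0
      set a' : ℕ → Ω → ℝ := fun n => K⁻¹ • a n with ha'
      set b' : ℕ → Ω → ℝ := fun n => K⁻¹ • b n with hb'
      have hnorm : ∀ (c : ℕ → Ω → ℝ),
          (∀ n, 1 ≤ n → StronglyMeasurable[ℱ n] (c n)) →
          (∀ n, 1 ≤ n → ℙ[c n | ℱ (n - 1)] =ᵐ[ℙ] 0) →
          (∀ n, 1 ≤ n → ∀ᵐ ω ∂ℙ, |c n ω| ≤ K) →
          ((∀ n, 1 ≤ n → StronglyMeasurable[ℱ n] (K⁻¹ • c n)) ∧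
           (∀ n, 1 ≤ n → ℙ[K⁻¹ • c n | ℱ (n - 1)] =ᵐ[ℙ] 0) ∧
           (∀ n, 1 ≤ n → ∀ᵐ ω ∂ℙ, |(K⁻¹ • c n) ω| ≤ 1)) := by
        intro c hc_meas hc_cond hc_bdd
        refine ⟨fun n hn => (hc_meas n hn).const_smul _, fun n hn => ?_, fun n hn => ?_⟩
        · refine (condExp_smul K⁻¹ (c n) (ℱ (n - 1))).trans ?_
          filter_upwards [hc_cond n hn] with ω hω
          simp only [Pi.smul_apply, hω, Pi.zero_apply, smul_eq_mul, mul_zero]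
        · filter_upwards [hc_bdd n hn] with ω hω
          simp only [Pi.smul_apply, smul_eq_mul]
          rw [abs_mul, abs_of_nonneg hKinv]
          calc K⁻¹ * |c n ω| ≤ K⁻¹ * K := mul_le_mul_of_nonneg_left hω hKinv
            _ = 1 := inv_mul_cancel₀ (ne_of_gt hK)
      obtain ⟨ha'_meas, ha'_cond, ha'_bdd⟩ := hnorm a ha_meas ha_cond ha_bdd
      obtain ⟨hb'_meas, hb'_cond, hb'_bdd⟩ := hnorm b hb_meas hb_cond hb_bdd
      have hc1 : (1:ℝ) ≤ 4 ^ (m*m) := one_le_pow₀ (by norm_num)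
      -- first application of key : moments of the partial sums of a'
      have happ1 := MdsAreaAux.key (ℙ := ℙ) ℱ m hm a' (fun _ _ => (1:ℝ))
        (fun _ => (1:ℝ)) (fun _ => (1:ℝ)) 1 le_rfl (fun _ => zero_le_one) (fun _ => zero_le_one)
        ha'_meas ha'_cond ha'_bdd
        (fun n hn => stronglyMeasurable_const)
        (fun n hn => Filter.Eventually.of_forall fun ω => by norm_num)
        (fun n hn => by simp)
      -- moments of A_{n-1}
      have hw2_mom : ∀ n, 1 ≤ n →
          ∫ ω, (∑ j ∈ Finset.Ico 1 n, a' j ω) ^ (2*m) ∂ℙ ≤ 4 ^ (m*m) * (n:ℝ) ^ m := by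
        intro n hn
        have hIco : Finset.Ico 1 n = Finset.Icc 1 (n-1) := by
          rw [← Finset.Ico_add_one_right_eq_Icc]
          congr 1
          omega
        have h1 := happ1 (n-1)
        simp only [one_mul] at h1
        rw [hIco]
        refine h1.trans ?_
        rw [Finset.sum_const, Nat.card_Icc]
        simp only [nsmul_eq_mul, mul_one, one_mul]
        have hle1 : ((n - 1 + 1 - 1 : ℕ) : ℝ) ≤ (n:ℝ) := by
          have : (n - 1 + 1 - 1 : ℕ) ≤ n := by omega
          exact_mod_cast this
        have h2 : ((n - 1 + 1 - 1 : ℕ) : ℝ) ^ m ≤ (n:ℝ) ^ m :=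
          pow_le_pow_left₀ (by positivity) hle1 m
        nlinarith [pow_nonneg (show (0:ℝ) ≤ ((n - 1 + 1 - 1 : ℕ):ℝ) by positivity) m]
      -- second application of key
      have hw2_meas : ∀ n, 1 ≤ n →
          StronglyMeasurable[ℱ (n-1)] (fun ω => ∑ j ∈ Finset.Ico 1 n, a' j ω) := by
        intro n hn
        refine Measurable.stronglyMeasurable ?_
        refine Finset.measurable_sum _ fun j hj => ?_
        rw [Finset.mem_Ico] at hj
        exact ((ha'_meas j hj.1).measurable).mono (ℱ.mono (by omega : j ≤ n - 1)) le_rfl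
      have hw2_bdd : ∀ n, 1 ≤ n →
          ∀ᵐ ω ∂ℙ, |∑ j ∈ Finset.Ico 1 n, a' j ω| ≤ (n:ℝ) := by
        intro n hn
        have h : ∀ᵐ ω ∂ℙ, ∀ j ∈ Finset.Ico 1 n, |a' j ω| ≤ 1 := by
          rw [Filter.eventually_all_finset]
          intro j hj
          exact ha'_bdd j (Finset.mem_Ico.1 hj).1
        filter_upwards [h] with ω hω
        calc |∑ j ∈ Finset.Ico 1 n, a' j ω| ≤ ∑ j ∈ Finset.Ico 1 n, |a' j ω| :=
              Finset.abs_sum_le_sum_abs _ _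
          _ ≤ ∑ j ∈ Finset.Ico 1 n, (1:ℝ) := Finset.sum_le_sum hω
          _ = ((n - 1 : ℕ) : ℝ) := by rw [Finset.sum_const, Nat.card_Ico]; simp
          _ ≤ (n:ℝ) := by exact_mod_cast Nat.sub_le n 1
      have happ2 := MdsAreaAux.key (ℙ := ℙ) ℱ m hm b'
        (fun n ω => ∑ j ∈ Finset.Ico 1 n, a' j ω)
        (fun n => (n:ℝ)) (fun n => (n:ℝ)) (4 ^ (m*m)) hc1
        (fun n => n.cast_nonneg) (fun n => n.cast_nonneg)
        hb'_meas hb'_cond hb'_bdd hw2_meas hw2_bdd hw2_mom N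
      -- identify the integrand
      have hsum_eq : ∀ ω : Ω, (∑ n ∈ Finset.Icc 1 N, (∑ j ∈ Finset.Ico 1 n, a' j ω) * b' n ω)
          = K⁻¹ * K⁻¹ * (∑ j₂ ∈ Finset.Icc 1 N, ∑ j₁ ∈ Finset.Ico 1 j₂, a j₁ ω * b j₂ ω) := by
        intro ω
        rw [Finset.mul_sum]
        refine Finset.sum_congr rfl fun n hn => ?_
        rw [Finset.sum_mul, Finset.mul_sum]
        refine Finset.sum_congr rfl fun j hj => ?_
        simp only [ha', hb', Pi.smul_apply, smul_eq_mul]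
        ring
      have hrw2 : ∫ ω, (∑ n ∈ Finset.Icc 1 N, (∑ j ∈ Finset.Ico 1 n, a' j ω) * b' n ω) ^ (2*m) ∂ℙ
          = (K⁻¹ * K⁻¹) ^ (2*m)
            * ∫ ω, (∑ j₂ ∈ Finset.Icc 1 N, ∑ j₁ ∈ Finset.Ico 1 j₂, a j₁ ω * b j₂ ω) ^ (2*m) ∂ℙ := by
        rw [← integral_const_mul]
        refine integral_congr_ae (Filter.Eventually.of_forall fun ω => ?_)
        simp only
        rw [hsum_eq ω, mul_pow]
      rw [hrw2] at happ2
      -- bound the u-sum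
      have hUbound : (∑ n ∈ Finset.Icc 1 N, (n:ℝ)) ^ m ≤ ((N:ℝ) ^ 2) ^ m := by
        refine pow_le_pow_left₀ (Finset.sum_nonneg fun j _ => j.cast_nonneg) ?_ m
        calc ∑ n ∈ Finset.Icc 1 N, (n:ℝ) ≤ ∑ n ∈ Finset.Icc 1 N, (N:ℝ) := by
              refine Finset.sum_le_sum fun j hj => ?_
              exact_mod_cast (Finset.mem_Icc.1 hj).2
          _ = (N:ℝ) * (N:ℝ) := by rw [Finset.sum_const, Nat.card_Icc]; simp
          _ = (N:ℝ) ^ 2 := (sq (N:ℝ)).symm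
      have hKpow : (K⁻¹ * K⁻¹) ^ (2*m) = (K ^ (4*m))⁻¹ := by
        rw [← sq, ← pow_mul, ← inv_pow]
        congr 1
        omega
      rw [hKpow] at happ2
      have hKpos : 0 < K ^ (4*m) := pow_pos hK _
      have hTnn : 0 ≤ ∫ ω, (∑ j₂ ∈ Finset.Icc 1 N, ∑ j₁ ∈ Finset.Ico 1 j₂, a j₁ ω * b j₂ ω) ^ (2*m) ∂ℙ :=
        integral_nonneg fun ω => Even.pow_nonneg ⟨m, two_mul m⟩ _
      have hmain : ∫ ω, (∑ j₂ ∈ Finset.Icc 1 N, ∑ j₁ ∈ Finset.Ico 1 j₂, a j₁ ω * b j₂ ω) ^ (2*m) ∂ℙ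
          ≤ 4 ^ (m*m) * 4 ^ (m*m) * K ^ (4*m) * ((N:ℝ)^2) ^ m := by
        have h3 : (K ^ (4*m))⁻¹
            * ∫ ω, (∑ j₂ ∈ Finset.Icc 1 N, ∑ j₁ ∈ Finset.Ico 1 j₂, a j₁ ω * b j₂ ω) ^ (2*m) ∂ℙ
            ≤ 4 ^ (m*m) * 4 ^ (m*m) * ((N:ℝ)^2) ^ m := by
          refine happ2.trans ?_
          have h4 : (0:ℝ) ≤ 4 ^ (m*m) * 4 ^ (m*m) := by positivity
          nlinarith [hUbound, pow_nonneg (Finset.sum_nonneg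
            (fun (j : ℕ) (_ : j ∈ Finset.Icc 1 N) => (Nat.cast_nonneg j : (0:ℝ) ≤ j))) m]
        calc ∫ ω, (∑ j₂ ∈ Finset.Icc 1 N, ∑ j₁ ∈ Finset.Ico 1 j₂, a j₁ ω * b j₂ ω) ^ (2*m) ∂ℙ
            = K ^ (4*m) * ((K ^ (4*m))⁻¹
              * ∫ ω, (∑ j₂ ∈ Finset.Icc 1 N, ∑ j₁ ∈ Finset.Ico 1 j₂, a j₁ ω * b j₂ ω) ^ (2*m) ∂ℙ) := by
              rw [← mul_assoc, mul_inv_cancel₀ (ne_of_gt hKpos), one_mul]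
          _ ≤ K ^ (4*m) * (4 ^ (m*m) * 4 ^ (m*m) * ((N:ℝ)^2) ^ m) :=
              mul_le_mul_of_nonneg_left h3 hKpos.le
          _ = 4 ^ (m*m) * 4 ^ (m*m) * K ^ (4*m) * ((N:ℝ)^2) ^ m := by ring
      refine hmain.trans ?_
      have hNpow : ((N:ℝ)^2) ^ m = (N:ℝ) ^ (2*m) := by rw [← pow_mul]
      rw [hNpow]
      have hrest : (0:ℝ) ≤ K ^ (4*m) * (N:ℝ) ^ (2*m) := by positivity
      nlinarith [hrest]
end

section
/- Let (Ω, 𝓕, ℙ) be a probability space with a filtration (𝓕_n)_{n≥0}. Let d ≥ 1, let (a_n)_{n≥1} be an ℝ^d-valued martingale difference sequence (each coordinate a_n^{(λ)} is 𝓕_n-measurable with E[a_n^{(λ)} | 𝓕_{n−1}] = 0 a.s.) with |a_n^{(λ)}| ≤ K a.s. for all n and 1 ≤ λ ≤ d, let (z_n)_{n≥1} be an adapted real sequence with |z_n| ≤ K² a.s., and let (c_{λν})_{1≤λ<ν≤d} be real constants with |c_{λν}| ≤ L. Define Z_N := ∑_{j=1}^N z_j − (1/2) ∑_{1≤λ<ν≤d}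 c_{λν} ∑_{1 ≤ j₁ < j₂ ≤ N} ( a_{j₁}^{(λ)} a_{j₂}^{(ν)} − a_{j₁}^{(ν)} a_{j₂}^{(λ)} ). Then for every m ∈ ℕ there exists a constant C = C(m, d, K, L) > 0, independent of N, such that E[ Z_N^{2m} ] ≤ C · N^{2m} for all N ∈ ℕ. -/
open MeasureTheory

namespace L2MB
open Finset

lemma pow_mul_le_pow_add (u v : ℝ) (hu : 0 ≤ u) (hv : 0 ≤ v) (p : ℕ) (hp : 1 ≤ p) :
    u ^ (p - 1) * v ≤ u ^ p + v ^ p := by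
  rcases le_total v u with h | h
  · calc u ^ (p-1) * v ≤ u ^ (p-1) * u := by
          exact mul_le_mul_of_nonneg_left h (pow_nonneg hu _)
    _ = u ^ p := by rw [← pow_succ]; congr 1; omega
    _ ≤ u ^ p + v ^ p := le_add_of_nonneg_right (pow_nonneg hv _)
  · calc u ^ (p-1) * v ≤ v ^ (p-1) * v := by
          exact mul_le_mul_of_nonneg_right (pow_le_pow_left₀ hu h _) hv
    _ = v ^ p := by rw [← pow_succ]; congr 1; omega
    _ ≤ u ^ p + v ^ p := le_add_of_nonneg_left (pow_nonneg hu _)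

lemma young (u v ρ : ℝ) (hu : 0 ≤ u) (hv : 0 ≤ v) (hρ : 0 < ρ) (p : ℕ) (hp : 1 ≤ p) :
    u ^ (p - 1) * v ≤ ρ ^ p * u ^ p + (v / ρ ^ (p - 1)) ^ p := by
  have hρ' : (0:ℝ) < ρ ^ (p-1) := pow_pos hρ _
  have h := pow_mul_le_pow_add (ρ * u) (v / ρ ^ (p-1)) (by positivity) (by positivity) p hp
  calc u ^ (p-1) * v = (ρ * u) ^ (p-1) * (v / ρ ^ (p-1)) := by
        rw [mul_pow]; field_simp
  _ ≤ (ρ * u) ^ p + (v / ρ ^ (p-1)) ^ p := h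
  _ = ρ ^ p * u ^ p + (v / ρ ^ (p-1)) ^ p := by rw [mul_pow]

lemma abs_pow_mul_le (x y : ℝ) (p k : ℕ) (h2 : 2 ≤ k) (hk : k ≤ 2 * p) :
    |x| ^ (2 * p - k) * |y| ^ k ≤ (x ^ 2) ^ (p - 1) * y ^ 2 + (y ^ 2) ^ p := by
  have hx : (0:ℝ) ≤ |x| := abs_nonneg x
  have hy : (0:ℝ) ≤ |y| := abs_nonneg y
  have hx2 : (x ^ 2) ^ (p - 1) = |x| ^ (2 * p - 2) := by
    rw [← sq_abs, ← pow_mul]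
    congr 1; omega
  have hy2 : (y ^ 2) ^ p = |y| ^ (2 * p) := by
    rw [← sq_abs, ← pow_mul]
  have hy2' : y ^ 2 = |y| ^ 2 := (sq_abs y).symm
  rcases le_total |y| |x| with h | h
  · have : |x| ^ (2*p-k) * |y| ^ k ≤ (x^2)^(p-1) * y^2 := by
      have hyk : |y| ^ k = |y| ^ (k-2) * |y| ^ 2 := by rw [← pow_add]; congr 1; omega
      rw [hx2, hy2', hyk, ← mul_assoc]
      have h1 : |x| ^ (2*p-k) * |y| ^ (k-2) ≤ |x| ^ (2*p-k) * |x| ^ (k-2) :=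
        mul_le_mul_of_nonneg_left (pow_le_pow_left₀ hy h _) (pow_nonneg hx _)
      have h2' : |x| ^ (2*p-k) * |x| ^ (k-2) = |x| ^ (2*p-2) := by
        rw [← pow_add]; congr 1; omega
      calc |x| ^ (2*p-k) * |y| ^ (k-2) * |y|^2
          ≤ |x| ^ (2*p-k) * |x| ^ (k-2) * |y|^2 :=
            mul_le_mul_of_nonneg_right h1 (pow_nonneg hy _)
        _ = |x| ^ (2*p-2) * |y|^2 := by rw [h2']
    exact this.trans (le_add_of_nonneg_right (by positivity))
  · have : |x| ^ (2*p-k) * |y| ^ k ≤ (y^2)^p := by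
      rw [hy2]
      calc |x| ^ (2*p-k) * |y| ^ k ≤ |y| ^ (2*p-k) * |y| ^ k :=
            mul_le_mul_of_nonneg_right (pow_le_pow_left₀ hx h _) (pow_nonneg hy _)
        _ = |y| ^ (2*p) := by rw [← pow_add]; congr 1; omega
    refine this.trans (le_add_of_nonneg_left ?_)
    have := hx2 ▸ pow_nonneg hx (2*p-2)
    positivity

lemma pow_headroom (x y : ℝ) (hy : 0 ≤ y) (hxy : y ≤ x) (p : ℕ) (hp : 1 ≤ p) :
    y ^ p + (x - y) * x ^ (p - 1) ≤ x ^ p := by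
  have hx : 0 ≤ x := hy.trans hxy
  have hp' : p - 1 + 1 = p := by omega
  calc y ^ p + (x - y) * x ^ (p-1) = y ^ (p-1) * y + (x - y) * x ^ (p-1) := by
        rw [← pow_succ, hp']
  _ ≤ x ^ (p-1) * y + (x - y) * x ^ (p-1) := by
        have := pow_le_pow_left₀ hy hxy (p-1)
        nlinarith [pow_nonneg hx (p-1), sub_nonneg.mpr hxy]
  _ = x ^ (p-1) * x := by ring
  _ = x ^ p := by rw [← pow_succ, hp']

lemma integrable_of_ae_bdd {Ω : Type} {mΩ : MeasurableSpace Ω} {ℙ : Measure Ω}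
    [IsFiniteMeasure ℙ] {f : Ω → ℝ} (hm : AEStronglyMeasurable f ℙ) {C : ℝ}
    (h : ∀ᵐ ω ∂ℙ, |f ω| ≤ C) : Integrable f ℙ :=
  (integrable_const C).mono' hm (by simpa [Real.norm_eq_abs] using h)

lemma mds_moment {Ω : Type} {mΩ : MeasurableSpace Ω} (ℙ : Measure Ω) [IsProbabilityMeasure ℙ]
    (ℱ : Filtration ℕ mΩ) (f : ℕ → Ω → ℝ) (D : ℕ → ℝ) (bsq : ℕ → ℝ) (m₀ N₀ : ℕ)
    (hmeas : ∀ j, 1 ≤ j → j ≤ N₀ → StronglyMeasurable[ℱ j] (f j))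
    (hbdd : ∀ j, 1 ≤ j → j ≤ N₀ → ∀ᵐ ω ∂ℙ, |f j ω| ≤ D j)
    (horth : ∀ j, 1 ≤ j → j ≤ N₀ → ∀ Y : Ω → ℝ, StronglyMeasurable[ℱ (j-1)] Y →
      (∃ CY : ℝ, ∀ᵐ ω ∂ℙ, |Y ω| ≤ CY) → ∫ ω, Y ω * f j ω ∂ℙ = 0)
    (hbpos : ∀ j, 1 ≤ j → j ≤ N₀ → 0 < bsq j)
    (hmom : ∀ j, 1 ≤ j → j ≤ N₀ → ∀ p, p ≤ m₀ → ∫ ω, (f j ω) ^ (2*p) ∂ℙ ≤ (bsq j) ^ p) :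
    ∀ N, N ≤ N₀ → ∀ p, p ≤ m₀ →
      ∫ ω, (∑ j ∈ Icc 1 N, f j ω) ^ (2*p) ∂ℙ ≤ (4 ^ (p+1) * ∑ j ∈ Icc 1 N, bsq j) ^ p := by
  intro N
  induction N with
  | zero =>
    intro _ p _
    rw [show Finset.Icc 1 0 = (∅ : Finset ℕ) from Finset.Icc_eq_empty (by omega)]
    simp only [Finset.sum_empty, mul_zero]
    rcases Nat.eq_zero_or_pos p with rfl | hp
    · simp
    · rw [zero_pow (by omega : 2*p ≠ 0), zero_pow (by omega : p ≠ 0)]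
      simp
  | succ N IH =>
    intro hN p hpm
    have hN' : N ≤ N₀ := by omega
    rcases Nat.eq_zero_or_pos p with rfl | hp1
    · simp
    -- abbreviations
    obtain ⟨g, hgdef⟩ : ∃ g : Ω → ℝ, g = fun ω => ∑ j ∈ Icc 1 N, f j ω := ⟨_, rfl⟩
    have hgω : ∀ ω, g ω = ∑ j ∈ Icc 1 N, f j ω := fun ω => by rw [hgdef]
    obtain ⟨h, hhdef⟩ : ∃ h : Ω → ℝ, h = f (N+1) := ⟨_, rfl⟩
    have hhω : ∀ ω, h ω = f (N+1) ω := fun ω => by rw [hhdef]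
    obtain ⟨b2, hb2def⟩ : ∃ x, x = bsq (N+1) := ⟨_, rfl⟩
    obtain ⟨s, hsdef⟩ : ∃ x, x = ∑ j ∈ Icc 1 N, bsq j := ⟨_, rfl⟩
    obtain ⟨A, hAdef⟩ : ∃ x : ℝ, x = 4 ^ (p+1) := ⟨_, rfl⟩
    have hsum_eq : ∀ ω, ∑ j ∈ Icc 1 (N+1), f j ω = g ω + h ω := fun ω => by
      rw [hgω, hhω]; exact Finset.sum_Icc_succ_top (by omega) _
    have hbsum : ∑ j ∈ Icc 1 (N+1), bsq j = s + b2 := by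
      rw [hsdef, hb2def]; exact Finset.sum_Icc_succ_top (by omega) _
    -- measurability
    have hgm : StronglyMeasurable[ℱ N] g := by
      rw [hgdef]
      exact Finset.stronglyMeasurable_fun_sum _ fun j hj =>
        (hmeas j (mem_Icc.mp hj).1 ((mem_Icc.mp hj).2.trans hN')).mono
          (ℱ.mono (mem_Icc.mp hj).2)
    have hgM : StronglyMeasurable g := hgm.mono (ℱ.le N)
    have hhm : StronglyMeasurable[ℱ (N+1)] h := hhdef ▸ hmeas (N+1) (by omega) hN
    have hhM : StronglyMeasurable h := hhm.mono (ℱ.le _)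
    -- bounds
    have hfb_all : ∀ᵐ ω ∂ℙ, ∀ j, 1 ≤ j → j ≤ N₀ → |f j ω| ≤ D j := by
      rw [MeasureTheory.ae_all_iff]
      intro j
      by_cases hj : 1 ≤ j ∧ j ≤ N₀
      · exact (hbdd j hj.1 hj.2).mono fun ω hω _ _ => hω
      · exact Filter.Eventually.of_forall fun ω h1 h2 => absurd ⟨h1, h2⟩ hj
    obtain ⟨DG, hDGdef⟩ : ∃ x, x = ∑ j ∈ Icc 1 N, |D j| := ⟨_, rfl⟩
    have hDG : 0 ≤ DG := by rw [hDGdef]; exact Finset.sum_nonneg fun j _ => abs_nonneg _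
    have hgb : ∀ᵐ ω ∂ℙ, |g ω| ≤ DG := hfb_all.mono fun ω hω => by
      rw [hgω, hDGdef]
      refine (Finset.abs_sum_le_sum_abs _ _).trans (Finset.sum_le_sum fun j hj => ?_)
      exact (hω j (mem_Icc.mp hj).1 ((mem_Icc.mp hj).2.trans hN')).trans (le_abs_self _)
    obtain ⟨DH, hDHdef⟩ : ∃ x, x = |D (N+1)| := ⟨_, rfl⟩
    have hDH : 0 ≤ DH := by rw [hDHdef]; exact abs_nonneg _
    have hhb : ∀ᵐ ω ∂ℙ, |h ω| ≤ DH := (hbdd (N+1) (by omega) hN).mono fun ω hω => by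
      rw [hhω, hDHdef]; exact hω.trans (le_abs_self _)
    -- integrability
    have hint : ∀ i k : ℕ, Integrable (fun ω => g ω ^ i * h ω ^ k) ℙ := by
      intro i k
      refine integrable_of_ae_bdd (C := DG ^ i * DH ^ k)
        ((hgM.pow i).mul (hhM.pow k)).aestronglyMeasurable ?_
      filter_upwards [hgb, hhb] with ω h1 h2
      rw [abs_mul, abs_pow, abs_pow]
      exact mul_le_mul (pow_le_pow_left₀ (abs_nonneg _) h1 i)
        (pow_le_pow_left₀ (abs_nonneg _) h2 k) (by positivity) (by positivity)
    have igp : ∀ i : ℕ, Integrable (fun ω => g ω ^ i) ℙ := fun i => by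
      simpa using hint i 0
    have ihp : ∀ k : ℕ, Integrable (fun ω => h ω ^ k) ℙ := fun k => by
      simpa using hint 0 k
    -- binomial expansion
    have hexp : ∫ ω, (g ω + h ω) ^ (2*p) ∂ℙ
        = ∑ k ∈ range (2*p+1), ((2*p).choose k : ℝ) * ∫ ω, g ω ^ k * h ω ^ (2*p - k) ∂ℙ := by
      have hpt : ∀ ω : Ω, (g ω + h ω) ^ (2*p)
          = ∑ k ∈ range (2*p+1), g ω ^ k * h ω ^ (2*p-k) * ((2*p).choose k : ℝ) :=
        fun ω => add_pow _ _ _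
      calc ∫ ω, (g ω + h ω) ^ (2*p) ∂ℙ
          = ∫ ω, ∑ k ∈ range (2*p+1), g ω ^ k * h ω ^ (2*p-k) * ((2*p).choose k : ℝ) ∂ℙ := by
            simp_rw [hpt]
      _ = ∑ k ∈ range (2*p+1), ∫ ω, g ω ^ k * h ω ^ (2*p-k) * ((2*p).choose k : ℝ) ∂ℙ :=
            integral_finset_sum _ (fun k _ => (hint k _).mul_const _)
      _ = _ := by
            refine Finset.sum_congr rfl fun k _ => ?_
            rw [integral_mul_const]; ring
    -- the martingale term vanishes
    have hzero : ∫ ω, g ω ^ (2*p-1) * h ω ^ (2*p - (2*p-1)) ∂ℙ = 0 := by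
      have h21 : 2*p - (2*p-1) = 1 := by omega
      rw [h21]
      simp only [pow_one]
      have hY : StronglyMeasurable[ℱ ((N+1)-1)] (fun ω => g ω ^ (2*p-1)) := hgm.pow _
      have := horth (N+1) (by omega) hN (fun ω => g ω ^ (2*p-1)) hY
        ⟨DG ^ (2*p-1), hgb.mono fun ω hω => by
          rw [abs_pow]; exact pow_le_pow_left₀ (abs_nonneg _) hω _⟩
      simp only [← hhω] at this
      exact this
    -- moment bounds
    have hIH : ∫ ω, g ω ^ (2*p) ∂ℙ ≤ (A * s) ^ p := by
      have := IH hN' p hpm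
      simp_rw [← hgω] at this
      rw [hAdef, hsdef]
      exact this
    have hs0 : 0 ≤ s := hsdef ▸ Finset.sum_nonneg fun j hj =>
      (hbpos j (mem_Icc.mp hj).1 ((mem_Icc.mp hj).2.trans hN')).le
    have hb2pos : 0 < b2 := hb2def ▸ hbpos (N+1) (by omega) hN
    obtain ⟨s', hs'def⟩ : ∃ x, x = s + b2 := ⟨_, rfl⟩
    have hs'pos : 0 < s' := by rw [hs'def]; positivity
    have hApos : 0 < A := by rw [hAdef]; positivity
    have hA1 : (1:ℝ) ≤ A := hAdef ▸ one_le_pow₀ (by norm_num)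
    have hAs'pos : 0 < A * s' := by positivity
    have hI2 : ∫ ω, h ω ^ (2*p) ∂ℙ ≤ b2 ^ p := by
      simp_rw [hhω]
      rw [hb2def]
      exact hmom (N+1) (by omega) hN p hpm
    -- the key Young-type bound
    have hI1 : ∫ ω, (g ω ^ 2) ^ (p-1) * h ω ^ 2 ∂ℙ ≤ 2 * (b2 * (A*s') ^ (p-1)) := by
      obtain ⟨r, hrdef⟩ : ∃ x, x = b2 / (A * s') := ⟨_, rfl⟩
      have hrpos : 0 < r := by rw [hrdef]; positivity
      obtain ⟨ρ, hρdef⟩ : ∃ x, x = r ^ ((p:ℝ)⁻¹) := ⟨_, rfl⟩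
      have hρpos : 0 < ρ := hρdef ▸ Real.rpow_pos_of_pos hrpos _
      have hρp : ρ ^ p = r := by rw [hρdef]; exact Real.rpow_inv_natCast_pow hrpos.le (by omega)
      have hpt : ∀ ω, (g ω ^ 2) ^ (p-1) * h ω ^ 2
          ≤ ρ^p * g ω ^ (2*p) + (1/(ρ^(p-1))^p) * h ω ^ (2*p) := by
        intro ω
        have hy := young (g ω ^ 2) (h ω ^ 2) ρ (sq_nonneg _) (sq_nonneg _) hρpos p hp1
        refine hy.trans (le_of_eq ?_)
        rw [div_pow, ← pow_mul, ← pow_mul]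
        ring
      have hint1 : Integrable (fun ω => (g ω ^ 2) ^ (p-1) * h ω ^ 2) ℙ := by
        simp_rw [← pow_mul]; exact hint _ _
      have hint2 : Integrable
          (fun ω => ρ^p * g ω ^ (2*p) + (1/(ρ^(p-1))^p) * h ω ^ (2*p)) ℙ :=
        ((igp (2*p)).const_mul _).add ((ihp (2*p)).const_mul _)
      have hmono := integral_mono_ae hint1 hint2 (Filter.Eventually.of_forall hpt)
      rw [integral_add ((igp (2*p)).const_mul _) ((ihp (2*p)).const_mul _),
        integral_const_mul, integral_const_mul] at hmono
      have hgle : ∫ ω, g ω ^ (2*p) ∂ℙ ≤ (A*s')^p := by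
        refine hIH.trans (pow_le_pow_left₀ (by positivity) ?_ p)
        have : s ≤ s' := by rw [hs'def]; linarith
        nlinarith
      have hρ1p : (ρ^(p-1))^p = r^(p-1) := by
        rw [← pow_mul, mul_comm, pow_mul, hρp]
      have step1 : ρ^p * ∫ ω, g ω ^ (2*p) ∂ℙ ≤ b2 * (A*s')^(p-1) := by
        rw [hρp, hrdef]
        have h1 : b2 / (A*s') * ∫ ω, g ω ^ (2*p) ∂ℙ ≤ b2 / (A*s') * (A*s')^p := by
          refine mul_le_mul_of_nonneg_left hgle (by positivity)
        refine h1.trans (le_of_eq ?_)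
        have hps : (A*s')^p = (A*s')^(p-1) * (A*s') := by
          rw [← pow_succ]; congr 1; omega
        rw [hps]
        field_simp
      have step2 : (1/(ρ^(p-1))^p) * ∫ ω, h ω ^ (2*p) ∂ℙ ≤ b2 * (A*s')^(p-1) := by
        rw [hρ1p, hrdef, div_pow]
        have hpos : (0:ℝ) < b2^(p-1) / (A*s')^(p-1) := by positivity
        have h1 : 1/(b2^(p-1)/(A*s')^(p-1)) * ∫ ω, h ω ^ (2*p) ∂ℙ
            ≤ 1/(b2^(p-1)/(A*s')^(p-1)) * b2^p := by
          exact mul_le_mul_of_nonneg_left hI2 (by positivity)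
        refine h1.trans (le_of_eq ?_)
        have hbp : b2^p = b2^(p-1) * b2 := by rw [← pow_succ]; congr 1; omega
        rw [hbp]
        field_simp
      linarith
    -- bound for intermediate terms
    have ih2p : Integrable (fun ω => (h ω ^ 2) ^ p) ℙ := by
      simp_rw [← pow_mul]; exact ihp (2*p)
    have hI2' : ∫ ω, (h ω ^ 2) ^ p ∂ℙ ≤ b2 ^ p := by
      simp_rw [← pow_mul]; exact hI2
    obtain ⟨T, hTdef⟩ : ∃ x : ℝ, x = 2 * (b2 * (A*s')^(p-1)) + b2 ^ p := ⟨_, rfl⟩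
    have hT0 : 0 ≤ T := by rw [hTdef]; positivity
    have hterm : ∀ k, k ≤ 2*p-2 → ∫ ω, g ω ^ k * h ω ^ (2*p-k) ∂ℙ ≤ T := by
      intro k hk
      have hκ2 : 2 ≤ 2*p - k := by omega
      have hpt2 : ∀ ω, g ω ^ k * h ω ^ (2*p-k)
          ≤ (g ω ^ 2) ^ (p-1) * h ω ^ 2 + (h ω ^ 2) ^ p := by
        intro ω
        have h1 : g ω ^ k * h ω ^ (2*p-k) ≤ |g ω| ^ k * |h ω| ^ (2*p-k) := by
          calc g ω ^ k * h ω ^ (2*p-k) ≤ |g ω ^ k * h ω ^ (2*p-k)| := le_abs_self _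
          _ = |g ω| ^ k * |h ω| ^ (2*p-k) := by rw [abs_mul, abs_pow, abs_pow]
        refine h1.trans ?_
        have hcl := abs_pow_mul_le (g ω) (h ω) p (2*p-k) hκ2 (by omega)
        have hkk : 2*p - (2*p-k) = k := by omega
        rw [hkk] at hcl
        exact hcl
      have hintL : Integrable (fun ω => g ω ^ k * h ω ^ (2*p-k)) ℙ := hint _ _
      have hintR : Integrable (fun ω => (g ω ^ 2) ^ (p-1) * h ω ^ 2 + (h ω ^ 2) ^ p) ℙ := by
        refine Integrable.add ?_ ih2p
        simp_rw [← pow_mul]; exact hint _ _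
      have := integral_mono_ae hintL hintR (Filter.Eventually.of_forall hpt2)
      rw [integral_add (by simp_rw [← pow_mul]; exact hint _ _) ih2p] at this
      refine this.trans ?_
      rw [hTdef]
      linarith
    -- sum of binomial coefficients
    have hchoose : (∑ k ∈ range (2*p-1), ((2*p).choose k : ℝ)) ≤ 4 ^ p := by
      have h1 : (∑ k ∈ range (2*p-1), (2*p).choose k) ≤ ∑ k ∈ range (2*p+1), (2*p).choose k :=
        Finset.sum_le_sum_of_subset (Finset.range_subset_range.mpr (by omega))
      have h2 : (∑ k ∈ range (2*p+1), (2*p).choose k) = 2 ^ (2*p) := Nat.sum_range_choose (2*p)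
      have h3 : (2:ℕ) ^ (2*p) = 4 ^ p := by rw [pow_mul]; norm_num
      calc (∑ k ∈ range (2*p-1), ((2*p).choose k : ℝ))
          = ((∑ k ∈ range (2*p-1), (2*p).choose k : ℕ) : ℝ) := by push_cast; ring
      _ ≤ ((4^p : ℕ) : ℝ) := by exact_mod_cast (h1.trans_eq (h2.trans h3))
      _ = 4 ^ p := by push_cast; ring
    -- assemble
    have hsplit : ∑ k ∈ range (2*p+1), ((2*p).choose k : ℝ) * ∫ ω, g ω ^ k * h ω ^ (2*p - k) ∂ℙ
        = (∑ k ∈ range (2*p-1), ((2*p).choose k : ℝ) * ∫ ω, g ω ^ k * h ω ^ (2*p - k) ∂ℙ)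
          + ((2*p).choose (2*p-1) : ℝ) * ∫ ω, g ω ^ (2*p-1) * h ω ^ (2*p - (2*p-1)) ∂ℙ
          + ((2*p).choose (2*p) : ℝ) * ∫ ω, g ω ^ (2*p) * h ω ^ (2*p - 2*p) ∂ℙ := by
      have e1 : 2*p+1 = (2*p-1) + 1 + 1 := by omega
      have e2 : 2*p-1+1 = 2*p := by omega
      rw [e1, Finset.sum_range_succ, Finset.sum_range_succ, e2]
    have hlast : ((2*p).choose (2*p) : ℝ) * ∫ ω, g ω ^ (2*p) * h ω ^ (2*p - 2*p) ∂ℙ ≤ (A*s)^p := by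
      rw [Nat.choose_self, Nat.sub_self]
      simp only [pow_zero, mul_one, Nat.cast_one, one_mul]
      exact hIH
    have hmain : (∑ k ∈ range (2*p-1), ((2*p).choose k : ℝ) * ∫ ω, g ω ^ k * h ω ^ (2*p - k) ∂ℙ)
        ≤ 4^p * T := by
      calc (∑ k ∈ range (2*p-1), ((2*p).choose k : ℝ) * ∫ ω, g ω ^ k * h ω ^ (2*p - k) ∂ℙ)
          ≤ ∑ k ∈ range (2*p-1), ((2*p).choose k : ℝ) * T := by
            refine Finset.sum_le_sum fun k hk => ?_
            have hk' : k ≤ 2*p - 2 := by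
              have := Finset.mem_range.mp hk; omega
            exact mul_le_mul_of_nonneg_left (hterm k hk') (by positivity)
      _ = (∑ k ∈ range (2*p-1), ((2*p).choose k : ℝ)) * T := by rw [← Finset.sum_mul]
      _ ≤ 4^p * T := mul_le_mul_of_nonneg_right hchoose hT0
    -- numeric finish
    have hTle : T ≤ 3 * (b2 * (A*s')^(p-1)) := by
      have hb2s' : b2 ≤ A * s' := by
        have h1 : b2 ≤ s' := by rw [hs'def]; linarith
        calc b2 ≤ s' := h1
        _ ≤ A * s' := le_mul_of_one_le_left hs'pos.le hA1
      have : b2 ^ p ≤ b2 * (A*s')^(p-1) := by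
        have hbp : b2^p = b2 * b2^(p-1) := by
          rw [← pow_succ']; congr 1; omega
        rw [hbp]
        exact mul_le_mul_of_nonneg_left (pow_le_pow_left₀ hb2pos.le hb2s' _) hb2pos.le
      rw [hTdef]; linarith
    have hfinal : (A*s)^p + 4^p * T ≤ (A*s')^p := by
      have hXpos : (0:ℝ) ≤ (A*s')^(p-1) := by positivity
      have hbX : (0:ℝ) ≤ b2 * (A*s')^(p-1) := by positivity
      have h4p : (0:ℝ) ≤ 4^p := by positivity
      have h4bX : (0:ℝ) ≤ 4^p * (b2 * (A*s')^(p-1)) := by positivity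
      have hA4 : A = 4 * 4^p := by rw [hAdef, pow_succ]; ring
      have h1 : 4^p * T ≤ 4^p * (3 * (b2 * (A*s')^(p-1))) :=
        mul_le_mul_of_nonneg_left hTle h4p
      have h2 : (A*s' - A*s) * (A*s')^(p-1) = A * (b2 * (A*s')^(p-1)) := by
        rw [hs'def]; ring
      have h3 : 4^p * (3 * (b2 * (A*s')^(p-1))) ≤ A * (b2 * (A*s')^(p-1)) := by
        calc 4^p * (3 * (b2 * (A*s')^(p-1))) = 3 * (4^p * (b2 * (A*s')^(p-1))) := by ring
        _ ≤ 4 * (4^p * (b2 * (A*s')^(p-1))) := by linarith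
        _ = (4*4^p) * (b2 * (A*s')^(p-1)) := by ring
        _ = A * (b2 * (A*s')^(p-1)) := by rw [← hA4]
      have hAsle : A*s ≤ A*s' := by
        have : s ≤ s' := by rw [hs'def]; linarith
        exact mul_le_mul_of_nonneg_left this hApos.le
      have hhead := pow_headroom (A*s') (A*s) (by positivity) hAsle p hp1
      linarith
    calc ∫ ω, (∑ j ∈ Icc 1 (N+1), f j ω) ^ (2*p) ∂ℙ
        = ∫ ω, (g ω + h ω) ^ (2*p) ∂ℙ := by simp_rw [hsum_eq]
    _ = ∑ k ∈ range (2*p+1), ((2*p).choose k : ℝ) * ∫ ω, g ω ^ k * h ω ^ (2*p - k) ∂ℙ := hexp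
    _ ≤ (A*s)^p + 4^p * T := by
        rw [hsplit, hzero, mul_zero, add_zero]
        have := hmain
        have := hlast
        linarith
    _ ≤ (A*s')^p := hfinal
    _ = (4 ^ (p+1) * ∑ j ∈ Icc 1 (N+1), bsq j) ^ p := by rw [hbsum, hAdef, hs'def]

lemma pair_sum_bound {d : ℕ} (F : Fin d → ℝ) (hF : ∀ lam, 0 ≤ F lam) :
    ∑ lam : Fin d, ∑ nu ∈ Finset.Ioi lam, (F lam + F nu)
      ≤ 2 * (d:ℝ) * ∑ lam : Fin d, F lam := by
  have hcard : ∀ lam : Fin d, ((Finset.Ioi lam).card : ℝ) ≤ (d:ℝ) := by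
    intro lam
    have h1 := Finset.card_le_univ (Finset.Ioi lam)
    have h2 : (Finset.univ : Finset (Fin d)).card = d := by simp
    exact_mod_cast h1.trans_eq h2
  have h1 : ∑ lam : Fin d, ∑ _nu ∈ Finset.Ioi lam, F lam ≤ (d:ℝ) * ∑ lam : Fin d, F lam := by
    calc ∑ lam : Fin d, ∑ _nu ∈ Finset.Ioi lam, F lam
        = ∑ lam : Fin d, ((Finset.Ioi lam).card : ℝ) * F lam := by
          refine Finset.sum_congr rfl fun lam _ => ?_
          rw [Finset.sum_const, nsmul_eq_mul]
    _ ≤ ∑ lam : Fin d, (d:ℝ) * F lam :=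
          Finset.sum_le_sum fun lam _ =>
            mul_le_mul_of_nonneg_right (hcard lam) (hF lam)
    _ = (d:ℝ) * ∑ lam : Fin d, F lam := by rw [Finset.mul_sum]
  have h2 : ∑ lam : Fin d, ∑ nu ∈ Finset.Ioi lam, F nu ≤ (d:ℝ) * ∑ lam : Fin d, F lam := by
    calc ∑ lam : Fin d, ∑ nu ∈ Finset.Ioi lam, F nu
        ≤ ∑ _lam : Fin d, ∑ nu : Fin d, F nu :=
          Finset.sum_le_sum fun lam _ =>
            Finset.sum_le_sum_of_subset_of_nonneg (Finset.subset_univ _) fun nu _ _ => hF nu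
    _ = (d:ℝ) * ∑ nu : Fin d, F nu := by
          rw [Finset.sum_const, nsmul_eq_mul, Finset.card_univ, Fintype.card_fin]
  calc ∑ lam : Fin d, ∑ nu ∈ Finset.Ioi lam, (F lam + F nu)
      = (∑ lam : Fin d, ∑ _nu ∈ Finset.Ioi lam, F lam)
        + ∑ lam : Fin d, ∑ nu ∈ Finset.Ioi lam, F nu := by
        simp only [Finset.sum_add_distrib]
  _ ≤ 2 * (d:ℝ) * ∑ lam : Fin d, F lam := by linarith

lemma e_bound {d : ℕ} (c : Fin d → Fin d → ℝ) (L₁ K' : ℝ)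
    (hc : ∀ lam nu : Fin d, lam < nu → |c lam nu| ≤ L₁) (hL₁ : 0 ≤ L₁) (hK' : 0 ≤ K')
    (S aj : Fin d → ℝ) (haj : ∀ nu, |aj nu| ≤ K') :
    |(-(1/2):ℝ) * ∑ lam : Fin d, ∑ nu ∈ Finset.Ioi lam,
        c lam nu * (S lam * aj nu - S nu * aj lam)|
      ≤ L₁ * K' * (d:ℝ) * ∑ lam : Fin d, |S lam| := by
  rw [abs_mul, show |(-(1/2):ℝ)| = 1/2 by norm_num]
  have key : |∑ lam : Fin d, ∑ nu ∈ Finset.Ioi lam, c lam nu * (S lam * aj nu - S nu * aj lam)|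
      ≤ L₁ * K' * (2 * (d:ℝ) * ∑ lam : Fin d, |S lam|) := by
    refine (Finset.abs_sum_le_sum_abs _ _).trans ?_
    have step : ∀ lam : Fin d,
        |∑ nu ∈ Finset.Ioi lam, c lam nu * (S lam * aj nu - S nu * aj lam)|
          ≤ ∑ nu ∈ Finset.Ioi lam, L₁ * K' * (|S lam| + |S nu|) := by
      intro lam
      refine (Finset.abs_sum_le_sum_abs _ _).trans (Finset.sum_le_sum fun nu hnu => ?_)
      rw [abs_mul]
      have h1 : |S lam * aj nu - S nu * aj lam| ≤ K' * (|S lam| + |S nu|) := by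
        calc |S lam * aj nu - S nu * aj lam| ≤ |S lam * aj nu| + |S nu * aj lam| :=
              abs_sub _ _
        _ = |S lam| * |aj nu| + |S nu| * |aj lam| := by rw [abs_mul, abs_mul]
        _ ≤ |S lam| * K' + |S nu| * K' :=
              add_le_add (mul_le_mul_of_nonneg_left (haj nu) (abs_nonneg _))
                (mul_le_mul_of_nonneg_left (haj lam) (abs_nonneg _))
        _ = K' * (|S lam| + |S nu|) := by ring
      calc |c lam nu| * |S lam * aj nu - S nu * aj lam|
          ≤ L₁ * (K' * (|S lam| + |S nu|)) :=
            mul_le_mul (hc lam nu (Finset.mem_Ioi.mp hnu)) h1 (abs_nonneg _) hL₁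
      _ = L₁ * K' * (|S lam| + |S nu|) := by ring
    calc ∑ lam : Fin d, |∑ nu ∈ Finset.Ioi lam, c lam nu * (S lam * aj nu - S nu * aj lam)|
        ≤ ∑ lam : Fin d, ∑ nu ∈ Finset.Ioi lam, L₁ * K' * (|S lam| + |S nu|) :=
          Finset.sum_le_sum fun lam _ => step lam
    _ = L₁ * K' * ∑ lam : Fin d, ∑ nu ∈ Finset.Ioi lam, (|S lam| + |S nu|) := by
          simp_rw [Finset.mul_sum]
    _ ≤ L₁ * K' * (2 * (d:ℝ) * ∑ lam : Fin d, |S lam|) :=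
          mul_le_mul_of_nonneg_left (pair_sum_bound _ fun lam => abs_nonneg _)
            (by positivity)
  calc (1/2) * |∑ lam : Fin d, ∑ nu ∈ Finset.Ioi lam,
        c lam nu * (S lam * aj nu - S nu * aj lam)|
      ≤ (1/2) * (L₁ * K' * (2 * (d:ℝ) * ∑ lam : Fin d, |S lam|)) :=
        mul_le_mul_of_nonneg_left key (by norm_num)
  _ = L₁ * K' * (d:ℝ) * ∑ lam : Fin d, |S lam| := by ring

lemma even_add_pow_le (x y : ℝ) (m : ℕ) :
    (x + y) ^ (2*m) ≤ 2 ^ (2*m - 1) * (x ^ (2*m) + y ^ (2*m)) := by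
  have habs : ∀ t : ℝ, |t| ^ (2*m) = t ^ (2*m) := fun t => by
    rw [pow_mul, sq_abs, ← pow_mul]
  have h1 : (x + y) ^ (2*m) ≤ (|x| + |y|) ^ (2*m) := by
    calc (x + y) ^ (2*m) = |x + y| ^ (2*m) := (habs _).symm
    _ ≤ (|x| + |y|) ^ (2*m) := pow_le_pow_left₀ (abs_nonneg _) (abs_add_le _ _) _
  have h2 := add_pow_le (abs_nonneg x) (abs_nonneg y) (2*m)
  rw [habs, habs] at h2
  linarith

end L2MB

open L2MB

/-- Moment bound for the second-level (`𝔤⁽²⁾`) coordinate of the product of random walk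
increments in a step-2 setting: with `a` an `ℝ^d`-valued bounded martingale difference
sequence, `z` a bounded adapted sequence and `c` bounded constants, the quantity
`Z_N = ∑ z_j − (1/2)∑_{λ<ν} c_{λν} ∑_{j₁<j₂}(a_{j₁}^{(λ)}a_{j₂}^{(ν)} − a_{j₁}^{(ν)}a_{j₂}^{(λ)})`
satisfies `E[Z_N^(2m)] ≤ C N^(2m)` with `C = C(m,d,K,L)` independent of `N`. -/
theorem level_two_moment_bound (d : ℕ) (hd : 1 ≤ d) (K L : ℝ) (m : ℕ) :
    ∃ C : ℝ, 0 < C ∧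
      ∀ (Ω : Type) (mΩ : MeasurableSpace Ω) (ℙ : Measure Ω), IsProbabilityMeasure ℙ →
        ∀ (ℱ : Filtration ℕ mΩ) (a : ℕ → Fin d → Ω → ℝ) (z : ℕ → Ω → ℝ)
          (c : Fin d → Fin d → ℝ),
        (∀ n, 1 ≤ n → ∀ lam : Fin d, StronglyMeasurable[ℱ n] (a n lam)) →
        (∀ n, 1 ≤ n → ∀ lam : Fin d, Integrable (a n lam) ℙ) →
        (∀ n, 1 ≤ n → ∀ lam : Fin d, ℙ[a n lam | ℱ (n - 1)] =ᵐ[ℙ] 0) →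
        (∀ n, 1 ≤ n → ∀ lam : Fin d, ∀ᵐ ω ∂ℙ, |a n lam ω| ≤ K) →
        (∀ n, 1 ≤ n → StronglyMeasurable[ℱ n] (z n)) →
        (∀ n, 1 ≤ n → ∀ᵐ ω ∂ℙ, |z n ω| ≤ K ^ 2) →
        (∀ lam nu : Fin d, lam < nu → |c lam nu| ≤ L) →
        ∀ N : ℕ,
          ∫ ω,
            (∑ j ∈ Finset.Icc 1 N, z j ω
              - (1 / 2) * ∑ lam : Fin d, ∑ nu ∈ Finset.Ioi lam, c lam nu *
                  ∑ j₂ ∈ Finset.Icc 1 N, ∑ j₁ ∈ Finset.Ico 1 j₂,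
                    (a j₁ lam ω * a j₂ nu ω - a j₁ nu ω * a j₂ lam ω)) ^ (2 * m) ∂ℙ
            ≤ C * (N : ℝ) ^ (2 * m) := by
  rcases Nat.eq_zero_or_pos m with rfl | hm
  · refine ⟨1, one_pos, ?_⟩
    intro Ω mΩ ℙ hℙ ℱ a z c _ _ _ _ _ _ _ N
    haveI := hℙ
    simp
  refine ⟨2^(2*m) * ((K^2)^(2*m) +
      (4^(m+1) * (((|L|+1)*(K+1)*(d:ℝ))^2 * (d:ℝ)^2 * 4^(m+1) * (K+1)^2))^m) + 1,
    by positivity, ?_⟩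
  intro Ω mΩ ℙ hℙ ℱ a z c hameas haint hacond habdd hzmeas hzbdd hcbdd N
  haveI := hℙ
  obtain ⟨c₀, hc₀⟩ : ∃ x : ℝ, x = ((|L|+1)*(K+1)*(d:ℝ))^2 * (d:ℝ)^2 * 4^(m+1) * (K+1)^2 :=
    ⟨_, rfl⟩
  rw [← hc₀]
  -- trivial case N = 0
  rcases Nat.eq_zero_or_pos N with rfl | hN1
  · rw [show Finset.Icc 1 0 = (∅ : Finset ℕ) from Finset.Icc_eq_empty (by omega)]
    simp only [Finset.sum_empty, mul_zero, Finset.sum_const_zero, sub_zero, Nat.cast_zero]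
    rw [zero_pow (by omega : 2*m ≠ 0)]
    simp
  -- basic facts
  have hK0 : 0 ≤ K := by
    haveI : (MeasureTheory.ae ℙ).NeBot :=
      MeasureTheory.ae_neBot.mpr (IsProbabilityMeasure.ne_zero ℙ)
    obtain ⟨ω, hω⟩ := (habdd 1 le_rfl ⟨0, hd⟩).exists
    exact (abs_nonneg _).trans hω
  have hL1 : ∀ lam nu : Fin d, lam < nu → |c lam nu| ≤ |L| + 1 := fun lam nu hlt =>
    (hcbdd lam nu hlt).trans ((le_abs_self L).trans (by linarith))
  have hL1pos : (0:ℝ) < |L| + 1 := by positivity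
  have hd1 : (1:ℝ) ≤ (d:ℝ) := by exact_mod_cast hd
  have hdpos : (0:ℝ) < (d:ℝ) := by linarith
  have hc₀pos : 0 < c₀ := by rw [hc₀]; positivity
  have hNpos : (0:ℝ) < (N:ℝ) := by exact_mod_cast hN1
  -- good events
  have hGa : ∀ᵐ ω ∂ℙ, ∀ j, 1 ≤ j → ∀ lam : Fin d, |a j lam ω| ≤ K := by
    rw [MeasureTheory.ae_all_iff]
    intro j
    by_cases hj : 1 ≤ j
    · have : ∀ᵐ ω ∂ℙ, ∀ lam : Fin d, |a j lam ω| ≤ K :=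
        (MeasureTheory.ae_all_iff).2 fun lam => habdd j hj lam
      exact this.mono fun ω hω _ => hω
    · exact Filter.Eventually.of_forall fun ω h1 => absurd h1 hj
  have hGz : ∀ᵐ ω ∂ℙ, ∀ j, 1 ≤ j → |z j ω| ≤ K^2 := by
    rw [MeasureTheory.ae_all_iff]
    intro j
    by_cases hj : 1 ≤ j
    · exact (hzbdd j hj).mono fun ω hω _ => hω
    · exact Filter.Eventually.of_forall fun ω h1 => absurd h1 hj
  -- orthogonality of bounded predictable integrands against increments
  have horth_a : ∀ j, 1 ≤ j → ∀ lam : Fin d, ∀ Y : Ω → ℝ,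
      StronglyMeasurable[ℱ (j-1)] Y → (∃ CY : ℝ, ∀ᵐ ω ∂ℙ, |Y ω| ≤ CY) →
      ∫ ω, Y ω * a j lam ω ∂ℙ = 0 := by
    intro j hj lam Y hYm hCYe
    obtain ⟨CY, hCY⟩ := hCYe
    have hYM : AEStronglyMeasurable Y ℙ := (hYm.mono (ℱ.le _)).aestronglyMeasurable
    have haM : AEStronglyMeasurable (a j lam) ℙ :=
      ((hameas j hj lam).mono (ℱ.le _)).aestronglyMeasurable
    have hprod : Integrable (Y * a j lam) ℙ := by
      refine integrable_of_ae_bdd (C := CY * K) (hYM.mul haM) ?_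
      filter_upwards [hCY, habdd j hj lam] with ω h1 h2
      rw [Pi.mul_apply, abs_mul]
      exact mul_le_mul h1 h2 (abs_nonneg _) ((abs_nonneg _).trans h1)
    have hpull := condExp_mul_of_stronglyMeasurable_left hYm hprod (haint j hj lam)
    have hz0 : (Y * ℙ[a j lam | ℱ (j-1)]) =ᵐ[ℙ] (0 : Ω → ℝ) :=
      (hacond j hj lam).mono fun ω hω => by
        simp only [Pi.mul_apply, Pi.zero_apply] at hω ⊢
        rw [hω, mul_zero]
    calc ∫ ω, Y ω * a j lam ω ∂ℙ
        = ∫ ω, (ℙ[Y * a j lam | ℱ (j-1)]) ω ∂ℙ := (integral_condExp (ℱ.le _)).symm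
    _ = ∫ ω, (0 : Ω → ℝ) ω ∂ℙ := integral_congr_ae (hpull.trans hz0)
    _ = 0 := by simp
  -- moment bound for the increments
  have hmom_a : ∀ (lam : Fin d) j, 1 ≤ j → ∀ p', p' ≤ m →
      ∫ ω, (a j lam ω)^(2*p') ∂ℙ ≤ ((K+1)^2)^p' := by
    intro lam j hj p' _
    have hb : ∀ᵐ ω ∂ℙ, (a j lam ω)^(2*p') ≤ ((K+1)^2)^p' :=
      (habdd j hj lam).mono fun ω hω => by
        have h1 : |a j lam ω| ≤ K+1 := hω.trans (by linarith)
        rw [pow_mul, ← sq_abs]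
        exact pow_le_pow_left₀ (sq_nonneg _) (pow_le_pow_left₀ (abs_nonneg _) h1 2) p'
    have hintA : Integrable (fun ω => (a j lam ω)^(2*p')) ℙ := by
      refine integrable_of_ae_bdd (C := (K+1)^(2*p'))
        (((hameas j hj lam).mono (ℱ.le _)).pow _).aestronglyMeasurable ?_
      exact (habdd j hj lam).mono fun ω hω => by
        rw [abs_pow]
        exact pow_le_pow_left₀ (abs_nonneg _) (hω.trans (by linarith)) _
    calc ∫ ω, (a j lam ω)^(2*p') ∂ℙ ≤ ∫ _ω, ((K+1)^2)^p' ∂ℙ :=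
          integral_mono_ae hintA (integrable_const _) hb
    _ = ((K+1)^2)^p' := by simp
  -- moment bound for partial sums of the increments
  have hSmom : ∀ (lam : Fin d) n, n ≤ N → ∀ p, p ≤ m →
      ∫ ω, (∑ j₁ ∈ Finset.Icc 1 n, a j₁ lam ω)^(2*p) ∂ℙ
        ≤ (4^(p+1) * ((n:ℝ) * (K+1)^2))^p := by
    intro lam n hn p hp
    have hcard : ∑ _j ∈ Finset.Icc 1 n, ((K+1)^2 : ℝ) = (n:ℝ) * (K+1)^2 := by
      rw [Finset.sum_const, nsmul_eq_mul, Nat.card_Icc]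
      norm_num
    have := mds_moment ℙ ℱ (fun j => a j lam) (fun _ => K) (fun _ => (K+1)^2) m N
      (fun j hj _ => hameas j hj lam)
      (fun j hj _ => habdd j hj lam)
      (fun j hj _ => horth_a j hj lam)
      (fun j _ _ => by positivity)
      (fun j hj _ p' hp' => hmom_a lam j hj p' hp') n hn p hp
    rw [hcard] at this
    exact this
  -- the compensator increments
  obtain ⟨e, hedef⟩ : ∃ e : ℕ → Ω → ℝ, e = fun j ω => -(1/2) *
      ∑ lam : Fin d, ∑ nu ∈ Finset.Ioi lam, c lam nu *
        ∑ j₁ ∈ Finset.Ico 1 j, (a j₁ lam ω * a j nu ω - a j₁ nu ω * a j lam ω) := ⟨_, rfl⟩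
  have heω : ∀ j ω, e j ω = -(1/2) *
      ∑ lam : Fin d, ∑ nu ∈ Finset.Ioi lam, c lam nu *
        ∑ j₁ ∈ Finset.Ico 1 j, (a j₁ lam ω * a j nu ω - a j₁ nu ω * a j lam ω) :=
    fun j ω => by rw [hedef]
  have heω2 : ∀ j ω, e j ω = -(1/2) *
      ∑ lam : Fin d, ∑ nu ∈ Finset.Ioi lam, c lam nu *
        ((∑ j₁ ∈ Finset.Ico 1 j, a j₁ lam ω) * a j nu ω
          - (∑ j₁ ∈ Finset.Ico 1 j, a j₁ nu ω) * a j lam ω) := by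
    intro j ω
    rw [heω]
    congr 1
    refine Finset.sum_congr rfl fun lam _ => Finset.sum_congr rfl fun nu _ => ?_
    congr 1
    rw [Finset.sum_sub_distrib, ← Finset.sum_mul, ← Finset.sum_mul]
  have hQeq : ∀ ω, ∑ j ∈ Finset.Icc 1 N, e j ω
      = -(1/2) * ∑ lam : Fin d, ∑ nu ∈ Finset.Ioi lam, c lam nu *
          ∑ j₂ ∈ Finset.Icc 1 N, ∑ j₁ ∈ Finset.Ico 1 j₂,
            (a j₁ lam ω * a j₂ nu ω - a j₁ nu ω * a j₂ lam ω) := by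
    intro ω
    simp_rw [heω]
    rw [← Finset.mul_sum]
    congr 1
    rw [Finset.sum_comm]
    refine Finset.sum_congr rfl fun lam _ => ?_
    rw [Finset.sum_comm]
    exact Finset.sum_congr rfl fun nu _ => (Finset.mul_sum _ _ _).symm
  have hmeas_e : ∀ j, 1 ≤ j → StronglyMeasurable[ℱ j] (e j) := by
    intro j hj
    simp only [hedef]
    refine StronglyMeasurable.const_mul ?_ _
    refine Finset.stronglyMeasurable_fun_sum _ fun lam _ => ?_
    refine Finset.stronglyMeasurable_fun_sum _ fun nu _ => ?_
    refine StronglyMeasurable.const_mul ?_ _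
    refine Finset.stronglyMeasurable_fun_sum _ fun j₁ hj₁ => ?_
    have h1 : 1 ≤ j₁ := (Finset.mem_Ico.mp hj₁).1
    have h2 : j₁ ≤ j := le_of_lt (Finset.mem_Ico.mp hj₁).2
    exact (((hameas j₁ h1 lam).mono (ℱ.mono h2)).mul (hameas j hj nu)).sub
      (((hameas j₁ h1 nu).mono (ℱ.mono h2)).mul (hameas j hj lam))
  -- deterministic partial-sum bound
  have hSptb : ∀ (j : ℕ) (lam : Fin d) (ω : Ω), (∀ j', 1 ≤ j' → ∀ l' : Fin d, |a j' l' ω| ≤ K) →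
      |∑ j₁ ∈ Finset.Ico 1 j, a j₁ lam ω| ≤ (j:ℝ) * K := by
    intro j lam ω hω
    refine (Finset.abs_sum_le_sum_abs _ _).trans ?_
    calc ∑ j₁ ∈ Finset.Ico 1 j, |a j₁ lam ω| ≤ ∑ _j₁ ∈ Finset.Ico 1 j, K :=
          Finset.sum_le_sum fun j₁ hj₁ => hω j₁ (Finset.mem_Ico.mp hj₁).1 lam
    _ = ((j-1 : ℕ):ℝ) * K := by rw [Finset.sum_const, nsmul_eq_mul, Nat.card_Ico]
    _ ≤ (j:ℝ) * K := by
          have hj1 : ((j-1:ℕ):ℝ) ≤ (j:ℝ) := by exact_mod_cast Nat.sub_le j 1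
          exact mul_le_mul_of_nonneg_right hj1 hK0
  have hbdd_e : ∀ j, 1 ≤ j → ∀ᵐ ω ∂ℙ,
      |e j ω| ≤ (|L|+1) * K * (d:ℝ) * ((d:ℝ) * ((j:ℝ) * K)) := by
    intro j hj
    filter_upwards [hGa] with ω hω
    rw [heω2]
    refine le_trans (e_bound c (|L|+1) K hL1 hL1pos.le hK0
      (fun lam => ∑ j₁ ∈ Finset.Ico 1 j, a j₁ lam ω) (fun nu => a j nu ω)
      (fun nu => hω j hj nu)) ?_
    refine mul_le_mul_of_nonneg_left ?_ (by positivity)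
    calc ∑ lam : Fin d, |∑ j₁ ∈ Finset.Ico 1 j, a j₁ lam ω|
        ≤ ∑ _lam : Fin d, (j:ℝ)*K := Finset.sum_le_sum fun lam _ => hSptb j lam ω hω
    _ = (d:ℝ) * ((j:ℝ)*K) := by
          rw [Finset.sum_const, nsmul_eq_mul, Finset.card_univ, Fintype.card_fin]
  -- orthogonality for e
  have horth_e : ∀ j, 1 ≤ j → ∀ Y : Ω → ℝ,
      StronglyMeasurable[ℱ (j-1)] Y → (∃ CY : ℝ, ∀ᵐ ω ∂ℙ, |Y ω| ≤ CY) →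
      ∫ ω, Y ω * e j ω ∂ℙ = 0 := by
    intro j hj Y hYm hCYe
    obtain ⟨CY, hCY⟩ := hCYe
    obtain ⟨S, hSdef⟩ : ∃ S : Fin d → Ω → ℝ,
        S = fun lam ω => ∑ j₁ ∈ Finset.Ico 1 j, a j₁ lam ω := ⟨_, rfl⟩
    have hSω : ∀ lam ω, S lam ω = ∑ j₁ ∈ Finset.Ico 1 j, a j₁ lam ω := fun lam ω => by
      rw [hSdef]
    have hSm : ∀ lam, StronglyMeasurable[ℱ (j-1)] (S lam) := by
      intro lam
      simp only [hSdef]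
      refine Finset.stronglyMeasurable_fun_sum _ fun j₁ hj₁ => ?_
      have h1 : 1 ≤ j₁ := (Finset.mem_Ico.mp hj₁).1
      have h2 : j₁ ≤ j - 1 := by have := (Finset.mem_Ico.mp hj₁).2; omega
      exact (hameas j₁ h1 lam).mono (ℱ.mono h2)
    have hSb : ∀ lam, ∀ᵐ ω ∂ℙ, |S lam ω| ≤ (j:ℝ)*K := fun lam =>
      hGa.mono fun ω hω => by rw [hSω]; exact hSptb j lam ω hω
    have hYSm : ∀ lam, StronglyMeasurable[ℱ (j-1)] (fun ω => Y ω * S lam ω) :=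
      fun lam => hYm.mul (hSm lam)
    have hYSb : ∀ lam, ∀ᵐ ω ∂ℙ, |Y ω * S lam ω| ≤ CY * ((j:ℝ)*K) := fun lam => by
      filter_upwards [hCY, hSb lam] with ω h1 h2
      rw [abs_mul]
      exact mul_le_mul h1 h2 (abs_nonneg _) ((abs_nonneg _).trans h1)
    have hfun : ∀ ω, Y ω * e j ω = ∑ lam : Fin d, ∑ nu ∈ Finset.Ioi lam,
        (-(1/2) * c lam nu) * (Y ω * (S lam ω * a j nu ω - S nu ω * a j lam ω)) := by
      intro ω
      rw [heω2 j ω]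
      simp_rw [← hSω]
      rw [mul_left_comm]
      simp only [Finset.mul_sum]
      exact Finset.sum_congr rfl fun lam _ => Finset.sum_congr rfl fun nu _ => by ring
    have hterm_int : ∀ (lam nu : Fin d), Integrable (fun ω =>
        (-(1/2) * c lam nu) * (Y ω * (S lam ω * a j nu ω - S nu ω * a j lam ω))) ℙ := by
      intro lam nu
      refine Integrable.const_mul ?_ _
      refine integrable_of_ae_bdd (C := CY * ((j:ℝ)*K * K + (j:ℝ)*K * K)) ?_ ?_
      · exact ((hYm.mono (ℱ.le _)).mul
          ((((hSm lam).mono (ℱ.le _)).mul ((hameas j hj nu).mono (ℱ.le _))).sub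
            (((hSm nu).mono (ℱ.le _)).mul
              ((hameas j hj lam).mono (ℱ.le _))))).aestronglyMeasurable
      · filter_upwards [hCY, hSb lam, hSb nu, habdd j hj nu, habdd j hj lam]
          with ω h1 h2 h3 h4 h5
        rw [abs_mul]
        refine mul_le_mul h1 ?_ (abs_nonneg _) ((abs_nonneg _).trans h1)
        calc |S lam ω * a j nu ω - S nu ω * a j lam ω|
            ≤ |S lam ω * a j nu ω| + |S nu ω * a j lam ω| := abs_sub _ _
        _ = |S lam ω| * |a j nu ω| + |S nu ω| * |a j lam ω| := by rw [abs_mul, abs_mul]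
        _ ≤ (j:ℝ)*K*K + (j:ℝ)*K*K := add_le_add
              (mul_le_mul h2 h4 (abs_nonneg _) (by positivity))
              (mul_le_mul h3 h5 (abs_nonneg _) (by positivity))
    have hint1 : ∀ (lam nu : Fin d),
        Integrable (fun ω => (Y ω * S lam ω) * a j nu ω) ℙ := by
      intro lam nu
      refine integrable_of_ae_bdd (C := CY * ((j:ℝ)*K) * K) ?_ ?_
      · exact (((hYm.mono (ℱ.le _)).mul ((hSm lam).mono (ℱ.le _))).mul
          ((hameas j hj nu).mono (ℱ.le _))).aestronglyMeasurable
      · filter_upwards [hYSb lam, habdd j hj nu] with ω h1 h2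
        rw [abs_mul]
        exact mul_le_mul h1 h2 (abs_nonneg _) ((abs_nonneg _).trans h1)
    calc ∫ ω, Y ω * e j ω ∂ℙ
        = ∫ ω, ∑ lam : Fin d, ∑ nu ∈ Finset.Ioi lam,
            (-(1/2) * c lam nu) * (Y ω * (S lam ω * a j nu ω - S nu ω * a j lam ω)) ∂ℙ := by
          simp_rw [hfun]
    _ = ∑ lam : Fin d, ∫ ω, ∑ nu ∈ Finset.Ioi lam,
            (-(1/2) * c lam nu) * (Y ω * (S lam ω * a j nu ω - S nu ω * a j lam ω)) ∂ℙ :=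
          integral_finset_sum _ fun lam _ =>
            integrable_finset_sum _ fun nu _ => hterm_int lam nu
    _ = ∑ lam : Fin d, ∑ nu ∈ Finset.Ioi lam, ∫ ω,
            (-(1/2) * c lam nu) * (Y ω * (S lam ω * a j nu ω - S nu ω * a j lam ω)) ∂ℙ :=
          Finset.sum_congr rfl fun lam _ =>
            integral_finset_sum _ fun nu _ => hterm_int lam nu
    _ = 0 := by
          refine Finset.sum_eq_zero fun lam _ => Finset.sum_eq_zero fun nu _ => ?_
          have hrw : ∀ ω, (-(1/2) * c lam nu) * (Y ω * (S lam ω * a j nu ω - S nu ω * a j lam ω))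
              = (-(1/2) * c lam nu) *
                  ((Y ω * S lam ω) * a j nu ω - (Y ω * S nu ω) * a j lam ω) := by
            intro ω; ring
          simp_rw [hrw]
          rw [integral_const_mul, integral_sub (hint1 lam nu) (hint1 nu lam),
            horth_a j hj nu _ (hYSm lam) ⟨CY*((j:ℝ)*K), hYSb lam⟩,
            horth_a j hj lam _ (hYSm nu) ⟨CY*((j:ℝ)*K), hYSb nu⟩]
          simp
  -- moment bounds for e
  have hmom_e : ∀ j, 1 ≤ j → j ≤ N → ∀ p, p ≤ m →
      ∫ ω, (e j ω)^(2*p) ∂ℙ ≤ (c₀ * (N:ℝ))^p := by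
    intro j hj hjN p hpm
    rcases Nat.eq_zero_or_pos p with rfl | hp1
    · simp
    obtain ⟨S, hSdef⟩ : ∃ S : Fin d → Ω → ℝ,
        S = fun lam ω => ∑ j₁ ∈ Finset.Ico 1 j, a j₁ lam ω := ⟨_, rfl⟩
    have hSω : ∀ lam ω, S lam ω = ∑ j₁ ∈ Finset.Ico 1 j, a j₁ lam ω := fun lam ω => by
      rw [hSdef]
    have hSM : ∀ lam, StronglyMeasurable (S lam) := by
      intro lam
      simp only [hSdef]
      exact Finset.stronglyMeasurable_fun_sum _ fun j₁ hj₁ =>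
        (hameas j₁ (Finset.mem_Ico.mp hj₁).1 lam).mono (ℱ.le _)
    have hSb : ∀ lam, ∀ᵐ ω ∂ℙ, |S lam ω| ≤ (j:ℝ)*K := fun lam =>
      hGa.mono fun ω hω => by rw [hSω]; exact hSptb j lam ω hω
    have hElam : ∀ᵐ ω ∂ℙ, (e j ω)^(2*p) ≤ (((|L|+1)*(K+1)*(d:ℝ))^2)^p *
        ((d:ℝ)^(2*p-1) * ∑ lam : Fin d, (S lam ω)^(2*p)) := by
      filter_upwards [hGa] with ω hω
      have hb1 : |e j ω| ≤ (|L|+1)*(K+1)*(d:ℝ) * ∑ lam : Fin d, |S lam ω| := by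
        rw [heω2]
        simp_rw [← hSω]
        refine le_trans (e_bound c (|L|+1) K hL1 hL1pos.le hK0
          (fun lam => S lam ω) (fun nu => a j nu ω) (fun nu => hω j hj nu)) ?_
        refine mul_le_mul_of_nonneg_right ?_ (Finset.sum_nonneg fun lam _ => abs_nonneg _)
        have hKK : K ≤ K + 1 := by linarith
        exact mul_le_mul_of_nonneg_right
          (mul_le_mul_of_nonneg_left hKK hL1pos.le) hdpos.le
      have hstep : (e j ω)^(2*p) = |e j ω|^(2*p) := by rw [pow_mul, ← sq_abs, ← pow_mul]
      have h2 : |e j ω|^(2*p) ≤ ((|L|+1)*(K+1)*(d:ℝ))^(2*p) *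
          (∑ lam : Fin d, |S lam ω|)^(2*p) := by
        rw [← mul_pow]
        exact pow_le_pow_left₀ (abs_nonneg _) hb1 _
      have h3 : (∑ lam : Fin d, |S lam ω|)^(2*p)
          ≤ (d:ℝ)^(2*p-1) * ∑ lam : Fin d, |S lam ω|^(2*p) := by
        have hpows := pow_sum_le_card_mul_sum_pow (s := (Finset.univ : Finset (Fin d)))
          (f := fun lam => |S lam ω|) (fun lam _ => abs_nonneg _) (2*p-1)
        rw [show 2*p-1+1 = 2*p by omega] at hpows
        simpa [Finset.card_univ, Fintype.card_fin] using hpows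
      have h4 : ∀ lam : Fin d, |S lam ω|^(2*p) = (S lam ω)^(2*p) := fun lam => by
        rw [pow_mul, sq_abs, ← pow_mul]
      calc (e j ω)^(2*p) = |e j ω|^(2*p) := hstep
      _ ≤ ((|L|+1)*(K+1)*(d:ℝ))^(2*p) * (∑ lam : Fin d, |S lam ω|)^(2*p) := h2
      _ ≤ ((|L|+1)*(K+1)*(d:ℝ))^(2*p) *
            ((d:ℝ)^(2*p-1) * ∑ lam : Fin d, |S lam ω|^(2*p)) :=
            mul_le_mul_of_nonneg_left h3 (by positivity)
      _ = (((|L|+1)*(K+1)*(d:ℝ))^2)^p *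
            ((d:ℝ)^(2*p-1) * ∑ lam : Fin d, (S lam ω)^(2*p)) := by
            simp_rw [h4]
            rw [← pow_mul]
    have heM : StronglyMeasurable (e j) := (hmeas_e j hj).mono (ℱ.le _)
    have hintL : Integrable (fun ω => (e j ω)^(2*p)) ℙ := by
      refine integrable_of_ae_bdd (C := ((|L|+1) * K * (d:ℝ) * ((d:ℝ) * ((j:ℝ) * K)))^(2*p))
        (heM.pow _).aestronglyMeasurable ?_
      filter_upwards [hbdd_e j hj] with ω h1
      rw [abs_pow]
      exact pow_le_pow_left₀ (abs_nonneg _) h1 _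
    have hintS : ∀ lam : Fin d, Integrable (fun ω => (S lam ω)^(2*p)) ℙ := by
      intro lam
      refine integrable_of_ae_bdd (C := ((j:ℝ)*K)^(2*p))
        ((hSM lam).pow _).aestronglyMeasurable ?_
      filter_upwards [hSb lam] with ω h1
      rw [abs_pow]
      exact pow_le_pow_left₀ (abs_nonneg _) h1 _
    have hintR : Integrable (fun ω => (((|L|+1)*(K+1)*(d:ℝ))^2)^p *
        ((d:ℝ)^(2*p-1) * ∑ lam : Fin d, (S lam ω)^(2*p))) ℙ := by
      refine Integrable.const_mul ?_ _
      refine Integrable.const_mul ?_ _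
      exact integrable_finset_sum _ fun lam _ => hintS lam
    have hmono := integral_mono_ae hintL hintR hElam
    have hIR : ∫ ω, (((|L|+1)*(K+1)*(d:ℝ))^2)^p *
          ((d:ℝ)^(2*p-1) * ∑ lam : Fin d, (S lam ω)^(2*p)) ∂ℙ
        = (((|L|+1)*(K+1)*(d:ℝ))^2)^p *
          ((d:ℝ)^(2*p-1) * ∑ lam : Fin d, ∫ ω, (S lam ω)^(2*p) ∂ℙ) := by
      rw [integral_const_mul, integral_const_mul,
        integral_finset_sum _ fun lam _ => hintS lam]
    have hSrw : ∀ (lam : Fin d) ω, S lam ω = ∑ j₁ ∈ Finset.Icc 1 (j-1), a j₁ lam ω := by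
      intro lam ω
      rw [hSω, show j = (j-1)+1 by omega, Finset.Ico_add_one_right_eq_Icc, Nat.add_sub_cancel]
    have hSint : ∀ lam : Fin d, ∫ ω, (S lam ω)^(2*p) ∂ℙ
        ≤ (4^(p+1) * (((j-1:ℕ):ℝ) * (K+1)^2))^p := by
      intro lam
      simp_rw [hSrw]
      exact hSmom lam (j-1) (by omega) p hpm
    have hjm1 : ((j-1:ℕ):ℝ) ≤ (N:ℝ) := by exact_mod_cast (by omega : j-1 ≤ N)
    have hbase : ((|L|+1)*(K+1)*(d:ℝ))^2 * (d:ℝ)^2 * (4^(p+1) * (((j-1:ℕ):ℝ)*(K+1)^2))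
        ≤ c₀ * (N:ℝ) := by
      rw [hc₀]
      have h4 : (4:ℝ)^(p+1) ≤ 4^(m+1) := pow_le_pow_right₀ (by norm_num) (by omega)
      calc ((|L|+1)*(K+1)*(d:ℝ))^2 * (d:ℝ)^2 * (4^(p+1) * (((j-1:ℕ):ℝ)*(K+1)^2))
          ≤ ((|L|+1)*(K+1)*(d:ℝ))^2 * (d:ℝ)^2 * (4^(m+1) * ((N:ℝ)*(K+1)^2)) := by
            refine mul_le_mul_of_nonneg_left ?_ (by positivity)
            exact mul_le_mul h4 (mul_le_mul_of_nonneg_right hjm1 (by positivity))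
              (by positivity) (by positivity)
      _ = ((|L|+1)*(K+1)*(d:ℝ))^2 * (d:ℝ)^2 * 4^(m+1) * (K+1)^2 * (N:ℝ) := by ring
    calc ∫ ω, (e j ω)^(2*p) ∂ℙ
        ≤ (((|L|+1)*(K+1)*(d:ℝ))^2)^p *
            ((d:ℝ)^(2*p-1) * ∑ lam : Fin d, ∫ ω, (S lam ω)^(2*p) ∂ℙ) := by
          rw [hIR] at hmono; exact hmono
    _ ≤ (((|L|+1)*(K+1)*(d:ℝ))^2)^p * ((d:ℝ)^(2*p-1) *
          ((d:ℝ) * (4^(p+1) * (((j-1:ℕ):ℝ)*(K+1)^2))^p)) := by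
          refine mul_le_mul_of_nonneg_left ?_ (by positivity)
          refine mul_le_mul_of_nonneg_left ?_ (by positivity)
          calc ∑ lam : Fin d, ∫ ω, (S lam ω)^(2*p) ∂ℙ
              ≤ ∑ _lam : Fin d, (4^(p+1) * (((j-1:ℕ):ℝ)*(K+1)^2))^p :=
                Finset.sum_le_sum fun lam _ => hSint lam
          _ = (d:ℝ) * (4^(p+1) * (((j-1:ℕ):ℝ)*(K+1)^2))^p := by
                rw [Finset.sum_const, nsmul_eq_mul, Finset.card_univ, Fintype.card_fin]
    _ = (((|L|+1)*(K+1)*(d:ℝ))^2 * (d:ℝ)^2 * (4^(p+1) * (((j-1:ℕ):ℝ)*(K+1)^2)))^p := by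
          have hdd : (d:ℝ)^(2*p-1) * (d:ℝ) = ((d:ℝ)^2)^p := by
            rw [← pow_succ, ← pow_mul]
            congr 1
            omega
          have hExp : (((|L|+1)*(K+1)*(d:ℝ))^2 * (d:ℝ)^2 *
                (4^(p+1) * (((j-1:ℕ):ℝ)*(K+1)^2)))^p
              = (((|L|+1)*(K+1)*(d:ℝ))^2)^p * ((d:ℝ)^2)^p *
                (4^(p+1) * (((j-1:ℕ):ℝ)*(K+1)^2))^p := by
            rw [mul_pow, mul_pow]
          rw [hExp, ← hdd]
          ring
    _ ≤ (c₀ * (N:ℝ))^p := pow_le_pow_left₀ (by positivity) hbase p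
  -- moment bound for Q = ∑ e
  have hQmom := mds_moment ℙ ℱ e
      (fun j => (|L|+1) * K * (d:ℝ) * ((d:ℝ) * ((j:ℝ) * K)))
      (fun _ => c₀ * (N:ℝ)) m N
      (fun j hj _ => hmeas_e j hj)
      (fun j hj _ => hbdd_e j hj)
      (fun j hj _ => horth_e j hj)
      (fun _ _ _ => by positivity)
      hmom_e N le_rfl m le_rfl
  have hsumc : ∑ _j ∈ Finset.Icc 1 N, (c₀ * (N:ℝ)) = (N:ℝ) * (c₀ * (N:ℝ)) := by
    rw [Finset.sum_const, nsmul_eq_mul, Nat.card_Icc]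
    norm_num
  rw [hsumc] at hQmom
  have hQmom' : ∫ ω, (∑ j ∈ Finset.Icc 1 N, e j ω)^(2*m) ∂ℙ
      ≤ (4^(m+1) * c₀)^m * (N:ℝ)^(2*m) := by
    refine hQmom.trans (le_of_eq ?_)
    rw [show (4:ℝ)^(m+1) * ((N:ℝ) * (c₀ * (N:ℝ))) = (4^(m+1)*c₀) * ((N:ℝ)^2) from by ring,
      mul_pow, ← pow_mul]
  -- P part
  have hPM : StronglyMeasurable (fun ω => ∑ j ∈ Finset.Icc 1 N, z j ω) :=
    Finset.stronglyMeasurable_fun_sum _ fun j hj =>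
      (hzmeas j (Finset.mem_Icc.mp hj).1).mono (ℱ.le _)
  have hPb : ∀ᵐ ω ∂ℙ, |∑ j ∈ Finset.Icc 1 N, z j ω| ≤ (N:ℝ) * K^2 := by
    filter_upwards [hGz] with ω hω
    refine (Finset.abs_sum_le_sum_abs _ _).trans ?_
    calc ∑ j ∈ Finset.Icc 1 N, |z j ω| ≤ ∑ _j ∈ Finset.Icc 1 N, K^2 :=
          Finset.sum_le_sum fun j hj => hω j (Finset.mem_Icc.mp hj).1
    _ = (N:ℝ) * K^2 := by
          rw [Finset.sum_const, nsmul_eq_mul, Nat.card_Icc]; norm_num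
  have hPint : Integrable (fun ω => (∑ j ∈ Finset.Icc 1 N, z j ω)^(2*m)) ℙ := by
    refine integrable_of_ae_bdd (C := ((N:ℝ)*K^2)^(2*m)) (hPM.pow _).aestronglyMeasurable ?_
    filter_upwards [hPb] with ω h1
    rw [abs_pow]
    exact pow_le_pow_left₀ (abs_nonneg _) h1 _
  have hPmom : ∫ ω, (∑ j ∈ Finset.Icc 1 N, z j ω)^(2*m) ∂ℙ
      ≤ (K^2)^(2*m) * (N:ℝ)^(2*m) := by
    have hb : ∀ᵐ ω ∂ℙ, (∑ j ∈ Finset.Icc 1 N, z j ω)^(2*m) ≤ ((N:ℝ)*K^2)^(2*m) := by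
      filter_upwards [hPb] with ω h1
      rw [pow_mul, ← sq_abs, ← pow_mul]
      exact pow_le_pow_left₀ (abs_nonneg _) h1 _
    calc ∫ ω, (∑ j ∈ Finset.Icc 1 N, z j ω)^(2*m) ∂ℙ
        ≤ ∫ _ω, ((N:ℝ)*K^2)^(2*m) ∂ℙ := integral_mono_ae hPint (integrable_const _) hb
    _ = ((N:ℝ)*K^2)^(2*m) := by simp
    _ = (K^2)^(2*m) * (N:ℝ)^(2*m) := by rw [mul_pow]; ring
  -- Q integrability
  have hQM : StronglyMeasurable (fun ω => ∑ j ∈ Finset.Icc 1 N, e j ω) :=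
    Finset.stronglyMeasurable_fun_sum _ fun j hj =>
      (hmeas_e j (Finset.mem_Icc.mp hj).1).mono (ℱ.le _)
  have hGe : ∀ᵐ ω ∂ℙ, ∀ j, 1 ≤ j → |e j ω| ≤ (|L|+1)*K*(d:ℝ)*((d:ℝ)*((j:ℝ)*K)) := by
    rw [MeasureTheory.ae_all_iff]
    intro j
    by_cases hj : 1 ≤ j
    · exact (hbdd_e j hj).mono fun ω hω _ => hω
    · exact Filter.Eventually.of_forall fun ω h1 => absurd h1 hj
  have hQb : ∀ᵐ ω ∂ℙ, |∑ j ∈ Finset.Icc 1 N, e j ω|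
      ≤ ∑ j ∈ Finset.Icc 1 N, (|L|+1)*K*(d:ℝ)*((d:ℝ)*((j:ℝ)*K)) := by
    filter_upwards [hGe] with ω hω
    refine (Finset.abs_sum_le_sum_abs _ _).trans ?_
    exact Finset.sum_le_sum fun j hj => hω j (Finset.mem_Icc.mp hj).1
  have hQint : Integrable (fun ω => (∑ j ∈ Finset.Icc 1 N, e j ω)^(2*m)) ℙ := by
    refine integrable_of_ae_bdd
      (C := (∑ j ∈ Finset.Icc 1 N, (|L|+1)*K*(d:ℝ)*((d:ℝ)*((j:ℝ)*K)))^(2*m))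
      (hQM.pow _).aestronglyMeasurable ?_
    filter_upwards [hQb] with ω h1
    rw [abs_pow]
    exact pow_le_pow_left₀ (abs_nonneg _) h1 _
  -- final assembly
  have hptQ : ∀ ω, (∑ j ∈ Finset.Icc 1 N, z j ω
      - (1 / 2) * ∑ lam : Fin d, ∑ nu ∈ Finset.Ioi lam, c lam nu *
          ∑ j₂ ∈ Finset.Icc 1 N, ∑ j₁ ∈ Finset.Ico 1 j₂,
            (a j₁ lam ω * a j₂ nu ω - a j₁ nu ω * a j₂ lam ω))
      = (∑ j ∈ Finset.Icc 1 N, z j ω) + ∑ j ∈ Finset.Icc 1 N, e j ω := by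
    intro ω
    rw [hQeq ω]
    ring
  have hsplit2 : ∫ ω, ((∑ j ∈ Finset.Icc 1 N, z j ω) + ∑ j ∈ Finset.Icc 1 N, e j ω)^(2*m) ∂ℙ
      ≤ 2^(2*m-1) * ((∫ ω, (∑ j ∈ Finset.Icc 1 N, z j ω)^(2*m) ∂ℙ)
        + ∫ ω, (∑ j ∈ Finset.Icc 1 N, e j ω)^(2*m) ∂ℙ) := by
    have hintsum : Integrable (fun ω =>
        ((∑ j ∈ Finset.Icc 1 N, z j ω) + ∑ j ∈ Finset.Icc 1 N, e j ω)^(2*m)) ℙ := by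
      refine integrable_of_ae_bdd
        (C := ((N:ℝ)*K^2 + ∑ j ∈ Finset.Icc 1 N, (|L|+1)*K*(d:ℝ)*((d:ℝ)*((j:ℝ)*K)))^(2*m))
        ((hPM.add hQM).pow _).aestronglyMeasurable ?_
      filter_upwards [hPb, hQb] with ω h1 h2
      rw [abs_pow]
      exact pow_le_pow_left₀ (abs_nonneg _) ((abs_add_le _ _).trans (add_le_add h1 h2)) _
    have hintrhs : Integrable (fun ω => 2^(2*m-1) *
        ((∑ j ∈ Finset.Icc 1 N, z j ω)^(2*m) + (∑ j ∈ Finset.Icc 1 N, e j ω)^(2*m))) ℙ :=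
      (hPint.add hQint).const_mul _
    have hm2 := integral_mono_ae hintsum hintrhs (Filter.Eventually.of_forall fun ω =>
      even_add_pow_le _ _ m)
    rw [integral_const_mul, integral_add hPint hQint] at hm2
    exact hm2
  calc ∫ ω, (∑ j ∈ Finset.Icc 1 N, z j ω
      - (1 / 2) * ∑ lam : Fin d, ∑ nu ∈ Finset.Ioi lam, c lam nu *
          ∑ j₂ ∈ Finset.Icc 1 N, ∑ j₁ ∈ Finset.Ico 1 j₂,
            (a j₁ lam ω * a j₂ nu ω - a j₁ nu ω * a j₂ lam ω)) ^ (2*m) ∂ℙ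
      = ∫ ω, ((∑ j ∈ Finset.Icc 1 N, z j ω) + ∑ j ∈ Finset.Icc 1 N, e j ω)^(2*m) ∂ℙ := by
        simp_rw [hptQ]
  _ ≤ 2^(2*m-1) * (((K^2)^(2*m) * (N:ℝ)^(2*m)) + ((4^(m+1)*c₀)^m * (N:ℝ)^(2*m))) := by
        refine hsplit2.trans ?_
        exact mul_le_mul_of_nonneg_left (add_le_add hPmom hQmom') (by positivity)
  _ ≤ (2^(2*m) * ((K^2)^(2*m) + (4^(m+1)*c₀)^m) + 1) * (N:ℝ)^(2*m) := by
        have hNp : (0:ℝ) ≤ (N:ℝ)^(2*m) := by positivity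
        have hB1 : (0:ℝ) ≤ (K^2)^(2*m) := by positivity
        have hB2 : (0:ℝ) ≤ (4^(m+1)*c₀)^m := by positivity
        have h2le : (2:ℝ)^(2*m-1) ≤ 2^(2*m) := pow_le_pow_right₀ (by norm_num) (by omega)
        nlinarith [mul_le_mul_of_nonneg_right h2le
          (mul_nonneg (add_nonneg hB1 hB2) hNp)]
end
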